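/- arXiv:1504.03122 — 3 statements merged into one kernel-verified Lean document; each statement's English description precedes it below -/
import Mathlib

section
/- Let Q = 2n+2 and define ψ(z) = ρ(z)^{−(Q−1)} for z ≠ 0. Then ℒψ(z) = 0 for every z ∈ (ℍⁿ×ℝ⁺)∖{0}, and ∂ψ/∂λ(z) = 0 at every point z = (x,y,t,0) ≠ 0 of the boundary {λ = 0}. -/
open Real Filter Set Topology MeasureTheory

noncomputable section

/-- Points of the extended space ℝ^{2n+2}: `z = (x, y, t, λ)`. -/
abbrev Pt (n : ℕ) : Type := (Fin n → ℝ) × (Fin n → ℝ) × ℝ × ℝ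

/-- Points of the Heisenberg group ℍⁿ = ℝ^{2n+1}: `ξ = (x, y, t)`. -/
abbrev HPt (n : ℕ) : Type := (Fin n → ℝ) × (Fin n → ℝ) × ℝ

namespace Heis

variable {n : ℕ}

/-- Partial derivative `∂/∂x_j`. -/
def pX (j : Fin n) (U : Pt n → ℝ) (z : Pt n) : ℝ :=
  deriv (fun s => U (Function.update z.1 j s, z.2.1, z.2.2.1, z.2.2.2)) (z.1 j)

/-- Partial derivative `∂/∂y_j`. -/
def pY (j : Fin n) (U : Pt n → ℝ) (z : Pt n) : ℝ :=
  deriv (fun s => U (z.1, Function.update z.2.1 j s, z.2.2.1, z.2.2.2)) (z.2.1 j)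

/-- Partial derivative `∂/∂t`. -/
def pT (U : Pt n → ℝ) (z : Pt n) : ℝ :=
  deriv (fun s => U (z.1, z.2.1, s, z.2.2.2)) z.2.2.1

/-- Partial derivative `∂/∂λ`. -/
def pL (U : Pt n → ℝ) (z : Pt n) : ℝ :=
  deriv (fun s => U (z.1, z.2.1, z.2.2.1, s)) z.2.2.2

/-- The Heisenberg sub-Laplacian `Δ_ℍ`, acting in the variables `(x, y, t)`. -/
def subLap (U : Pt n → ℝ) (z : Pt n) : ℝ :=
  (∑ j, (pX j (pX j U) z + pY j (pY j U) z
      + 4 * z.2.1 j * pX j (pT U) z - 4 * z.1 j * pY j (pT U) z))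
    + 4 * ((∑ j, z.1 j ^ 2) + (∑ j, z.2.1 j ^ 2)) * pT (pT U) z

/-- The extension operator `ℒ U = ∂²U/∂λ² + 4λ² ∂²U/∂t² + Δ_ℍ U`. -/
def Lop (U : Pt n → ℝ) (z : Pt n) : ℝ :=
  pL (pL U) z + 4 * z.2.2.2 ^ 2 * pT (pT U) z + subLap U z

/-- `r² = |x|² + |y|² + λ²`. -/
def rSq (z : Pt n) : ℝ := (∑ j, z.1 j ^ 2) + (∑ j, z.2.1 j ^ 2) + z.2.2.2 ^ 2

/-- `r = (|x|² + |y|² + λ²)^{1/2}`. -/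
def rr (z : Pt n) : ℝ := Real.sqrt (rSq z)

/-- `r₀ = (|x|² + |y|²)^{1/2}`. -/
def r0 (z : Pt n) : ℝ := Real.sqrt ((∑ j, z.1 j ^ 2) + (∑ j, z.2.1 j ^ 2))

/-- The gauge `ρ(z) = (r⁴ + t²)^{1/4}`. -/
def rho (z : Pt n) : ℝ := (rSq z ^ 2 + z.2.2.1 ^ 2) ^ ((1 : ℝ) / 4)

/-- The open half-space ℍⁿ × ℝ⁺ = {λ > 0}. -/
def halfSpace (n : ℕ) : Set (Pt n) := {z | 0 < z.2.2.2}

/-- The closed half-space {λ ≥ 0}. -/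
def closedHalfSpace (n : ℕ) : Set (Pt n) := {z | 0 ≤ z.2.2.2}

/-- `U` is cylindrical: it depends only on `(r₀, t, λ)`. -/
def Cylindrical (U : Pt n → ℝ) : Prop :=
  ∀ z w : Pt n,
    (∑ j, z.1 j ^ 2) + (∑ j, z.2.1 j ^ 2) = (∑ j, w.1 j ^ 2) + (∑ j, w.2.1 j ^ 2) →
    z.2.2.1 = w.2.2.1 → z.2.2.2 = w.2.2.2 → U z = U w

/-- The CR-inverted point `z̃`. -/
def crPt (z : Pt n) : Pt n :=
  (fun i => (z.1 i * z.2.2.1 + z.2.1 i * rSq z) / rho z ^ 4,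
   fun i => (z.2.1 i * z.2.2.1 - z.1 i * rSq z) / rho z ^ 4,
   -z.2.2.1 / rho z ^ 4,
   z.2.2.2 / rho z ^ 2)

/-- CR inversion of a function: `v(z) = ρ(z)^{-(Q-1)} U(z̃)`, with `Q - 1 = 2n + 1`. -/
def crInv (U : Pt n → ℝ) (z : Pt n) : ℝ := U (crPt z) / rho z ^ (2 * n + 1)

/-- Group law on ℝ^{2n+2}: `gmul ẑ z = ẑ ∘ z`. -/
def gmul (w z : Pt n) : Pt n :=
  (w.1 + z.1, w.2.1 + z.2.1,
   w.2.2.1 + z.2.2.1 + 2 * ∑ j, (z.1 j * w.2.1 j - z.2.1 j * w.1 j),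
   w.2.2.2 + z.2.2.2)

/-- Group inverse on ℝ^{2n+2}. -/
def ginv (z : Pt n) : Pt n := (-z.1, -z.2.1, -z.2.2.1, -z.2.2.2)

/-- Gauge distance `d(z, ẑ) = |ẑ⁻¹ ∘ z|`. -/
def gdist (z w : Pt n) : ℝ := rho (gmul (ginv w) z)

/-- Gauge ball in ℝ^{2n+2}. -/
def gBall (z₀ : Pt n) (R : ℝ) : Set (Pt n) := {z | gdist z z₀ < R}

/-- The fourth power of the gauge distance from `z₀` (a polynomial function). -/
def gaugeQuartic (z₀ z : Pt n) : ℝ :=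
  rSq (gmul (ginv z₀) z) ^ 2 + (gmul (ginv z₀) z).2.2.1 ^ 2

/-- Euclidean gradient of a function on ℝ^{2n+2}. -/
def egrad (F : Pt n → ℝ) (z : Pt n) : Pt n :=
  (fun j => pX j F z, fun j => pY j F z, pT F z, pL F z)

/-- Euclidean dot product on ℝ^{2n+2}. -/
def dotP (v w : Pt n) : ℝ :=
  (∑ j, v.1 j * w.1 j) + (∑ j, v.2.1 j * w.2.1 j) + v.2.2.1 * w.2.2.1 + v.2.2.2 * w.2.2.2

/-- Euclidean norm on ℝ^{2n+2}. -/
def enormP (v : Pt n) : ℝ := Real.sqrt (dotP v v)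

/-- Outward Euclidean unit normal to the gauge ball centered at `z₀`, at a boundary point `P`
(the normalized Euclidean gradient of the fourth power of the gauge distance). -/
def outerNormal (z₀ P : Pt n) : Pt n :=
  (enormP (egrad (gaugeQuartic z₀) P))⁻¹ • egrad (gaugeQuartic z₀) P

/-- Euclidean directional derivative of `U` at `z` along the vector `v`. -/
def dirDeriv (U : Pt n → ℝ) (z v : Pt n) : ℝ :=
  (∑ j, v.1 j * pX j U z) + (∑ j, v.2.1 j * pY j U z)
    + v.2.2.1 * pT U z + v.2.2.2 * pL U z

/-! Heisenberg group ℝ^{2n+1}. -/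

/-- Partial derivative `∂/∂x_j` on ℝ^{2n+1}. -/
def pXh (j : Fin n) (F : HPt n → ℝ) (ξ : HPt n) : ℝ :=
  deriv (fun s => F (Function.update ξ.1 j s, ξ.2.1, ξ.2.2)) (ξ.1 j)

/-- Partial derivative `∂/∂y_j` on ℝ^{2n+1}. -/
def pYh (j : Fin n) (F : HPt n → ℝ) (ξ : HPt n) : ℝ :=
  deriv (fun s => F (ξ.1, Function.update ξ.2.1 j s, ξ.2.2)) (ξ.2.1 j)

/-- Partial derivative `∂/∂t` on ℝ^{2n+1}. -/
def pTh (F : HPt n → ℝ) (ξ : HPt n) : ℝ :=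
  deriv (fun s => F (ξ.1, ξ.2.1, s)) ξ.2.2

/-- Heisenberg group law: `hmul ξ̂ ξ = ξ̂ ∘ ξ`. -/
def hmul (w z : HPt n) : HPt n :=
  (w.1 + z.1, w.2.1 + z.2.1,
   w.2.2 + z.2.2 + 2 * ∑ j, (z.1 j * w.2.1 j - z.2.1 j * w.1 j))

/-- Heisenberg group inverse. -/
def hinv (z : HPt n) : HPt n := (-z.1, -z.2.1, -z.2.2)

/-- `|x|² + |y|²` on ℝ^{2n+1}. -/
def hrSq (ξ : HPt n) : ℝ := (∑ j, ξ.1 j ^ 2) + (∑ j, ξ.2.1 j ^ 2)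

/-- Heisenberg gauge norm `|ξ|_ℍ = [(|x|²+|y|²)² + t²]^{1/4}`. -/
def hnorm (ξ : HPt n) : ℝ := (hrSq ξ ^ 2 + ξ.2.2 ^ 2) ^ ((1 : ℝ) / 4)

/-- Heisenberg gauge distance. -/
def hdist (ξ ζ : HPt n) : ℝ := hnorm (hmul (hinv ζ) ξ)

/-- Heisenberg gauge ball. -/
def hBall (ξ₀ : HPt n) (R : ℝ) : Set (HPt n) := {ξ | hdist ξ ξ₀ < R}

/-- Fourth power of the Heisenberg gauge distance from `ξ₀`. -/
def hGaugeQuartic (ξ₀ ξ : HPt n) : ℝ :=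
  hrSq (hmul (hinv ξ₀) ξ) ^ 2 + (hmul (hinv ξ₀) ξ).2.2 ^ 2

/-- Euclidean gradient on ℝ^{2n+1}. -/
def hgrad (F : HPt n → ℝ) (ξ : HPt n) : HPt n :=
  (fun j => pXh j F ξ, fun j => pYh j F ξ, pTh F ξ)

/-- Euclidean dot product on ℝ^{2n+1}. -/
def hdot (v w : HPt n) : ℝ :=
  (∑ j, v.1 j * w.1 j) + (∑ j, v.2.1 j * w.2.1 j) + v.2.2 * w.2.2

/-- Euclidean norm on ℝ^{2n+1}. -/
def hnormE (v : HPt n) : ℝ := Real.sqrt (hdot v v)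

/-- Outward Euclidean unit normal to the Heisenberg gauge ball centered at `ξ₀`
at a boundary point `P`. -/
def hOuterNormal (ξ₀ P : HPt n) : HPt n :=
  (hnormE (hgrad (hGaugeQuartic ξ₀) P))⁻¹ • hgrad (hGaugeQuartic ξ₀) P

/-- The cylinder `𝒞 = Ω × (0, ∞)` seen inside ℝ^{2n+2}. -/
def cylSet (Ω : Set (HPt n)) : Set (Pt n) :=
  {z | (z.1, z.2.1, z.2.2.1) ∈ Ω ∧ 0 < z.2.2.2}

/-- The bottom of the cylinder, `Ω × {0}`. -/
def botSet (Ω : Set (HPt n)) : Set (Pt n) :=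
  {z | (z.1, z.2.1, z.2.2.1) ∈ Ω ∧ z.2.2.2 = 0}

/-- `h₀(z) = ρ(z + β₂ e_{2n+2})^{-β₁}`. -/
def hZero (β₁ β₂ : ℝ) (z : Pt n) : ℝ :=
  rho (z.1, z.2.1, z.2.2.1, z.2.2.2 + β₂) ^ (-β₁)

/-- The moving-plane region `Σ_μ = {z ∈ ℍⁿ × ℝ⁺ : t < μ}`. -/
def SigmaSet (n : ℕ) (μ : ℝ) : Set (Pt n) := {z | 0 < z.2.2.2 ∧ z.2.2.1 < μ}

/-- The `H`-reflection `z_μ = (y, x, 2μ - t, λ)`. -/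
def hRefl (μ : ℝ) (z : Pt n) : Pt n := (z.2.1, z.1, 2 * μ - z.2.2.1, z.2.2.2)

/-- The reflected origin `e_μ = (0, 0, 2μ, 0)`. -/
def eMu (n : ℕ) (μ : ℝ) : Pt n := (0, 0, 2 * μ, 0)

/-- `W̃_μ = (w ∘ reflection - w) / h₀`. -/
def WT (w h₀ : Pt n → ℝ) (μ : ℝ) (z : Pt n) : ℝ := (w (hRefl μ z) - w z) / h₀ z

end Heis

open Heis

/-! ### Auxiliary lemmas -/


lemma sum_update_sq {n : ℕ} (x : Fin n → ℝ) (j : Fin n) (s : ℝ) :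
    ∑ i, Function.update x j s i ^ 2 = s ^ 2 + ((∑ i, x i ^ 2) - x j ^ 2) := by
  have h : ∀ i ∈ Finset.univ, Function.update x j s i ^ 2
      = Function.update (fun i => x i ^ 2) j (s ^ 2) i := by
    intro i _
    rcases eq_or_ne i j with rfl | h
    · simp
    · simp [Function.update_of_ne h]
  rw [Finset.sum_congr rfl h, Finset.sum_update_of_mem (Finset.mem_univ j)]
  congr 1
  rw [Finset.sum_sdiff_eq_sub (Finset.subset_univ _), Finset.sum_singleton]

lemma shape1 (c t α x : ℝ) (h : (x^2+c)^2+t^2 ≠ 0) :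
    HasDerivAt (fun s : ℝ => ((s^2+c)^2+t^2) ^ α)
      (α * ((x^2+c)^2+t^2) ^ (α-1) * (4*(x^2+c)*x)) x := by
  have h1 : HasDerivAt (fun s : ℝ => (s^2+c)^2+t^2) (4*(x^2+c)*x) x := by
    have := (((hasDerivAt_pow 2 x).add_const c).pow 2).add_const (t^2)
    convert this using 1 <;> try rfl
    simp; ring
  have h2 := h1.rpow_const (p := α) (Or.inl h)
  convert h2 using 1
  ring

lemma shape2 (K α x : ℝ) (h : K + x^2 ≠ 0) :
    HasDerivAt (fun s : ℝ => (K + s^2) ^ α) (α * (K+x^2) ^ (α-1) * (2*x)) x := by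
  have h1 : HasDerivAt (fun s : ℝ => K + s^2) (2*x) x := by
    have := (hasDerivAt_pow 2 x).const_add K
    convert this using 1 <;> try rfl
    simp
  have h2 := h1.rpow_const (p := α) (Or.inl h)
  convert h2 using 1
  ring

lemma shape3 (c t β x : ℝ) (h : (x^2+c)^2+t^2 ≠ 0) :
    HasDerivAt (fun s : ℝ => ((s^2+c)^2+t^2) ^ β * ((s^2+c)*s))
      (β * ((x^2+c)^2+t^2) ^ (β-1) * (4*(x^2+c)*x) * ((x^2+c)*x)
        + ((x^2+c)^2+t^2) ^ β * (3*x^2+c)) x := by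
  have h1 : HasDerivAt (fun s : ℝ => (s^2+c)*s) (3*x^2+c) x := by
    have := (((hasDerivAt_pow 2 x).add_const c)).mul (hasDerivAt_id x)
    convert this using 1 <;> try rfl
    simp; ring
  exact (shape1 c t β x h).mul h1

lemma shape4 (K β x : ℝ) (h : K + x^2 ≠ 0) :
    HasDerivAt (fun s : ℝ => (K + s^2) ^ β * s)
      (β * (K+x^2) ^ (β-1) * (2*x) * x + (K+x^2) ^ β) x := by
  have := (shape2 K β x h).mul (hasDerivAt_id x)
  convert this using 1 <;> try rfl
  simp

namespace Heis
variable {n : ℕ}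

variable {n : ℕ}

def gfun (z : Pt n) : ℝ := rSq z ^ 2 + z.2.2.1 ^ 2

def psiA (α : ℝ) : Pt n → ℝ := fun w => gfun w ^ α

lemma gfun_nonneg (z : Pt n) : 0 ≤ gfun z := by unfold gfun; positivity

lemma gfun_updX (z : Pt n) (j : Fin n) (s : ℝ) :
    gfun (Function.update z.1 j s, z.2.1, z.2.2.1, z.2.2.2)
      = (s^2 + ((∑ i, z.1 i ^ 2) - z.1 j ^ 2 + (∑ i, z.2.1 i ^ 2) + z.2.2.2 ^ 2))^2
          + z.2.2.1^2 := by
  simp only [gfun, rSq, sum_update_sq]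
  ring

lemma rSq_updX (z : Pt n) (j : Fin n) (s : ℝ) :
    rSq (Function.update z.1 j s, z.2.1, z.2.2.1, z.2.2.2)
      = s^2 + ((∑ i, z.1 i ^ 2) - z.1 j ^ 2 + (∑ i, z.2.1 i ^ 2) + z.2.2.2 ^ 2) := by
  simp only [rSq, sum_update_sq]
  ring

lemma pX_psi (α : ℝ) (j : Fin n) (z : Pt n) (hz : gfun z ≠ 0) :
    pX j (psiA α) z = α * gfun z ^ (α-1) * (4 * rSq z * z.1 j) := by
  set c : ℝ := (∑ i, z.1 i ^ 2) - z.1 j ^ 2 + (∑ i, z.2.1 i ^ 2) + z.2.2.2 ^ 2 with hc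
  have hb : z.1 j ^ 2 + c = rSq z := by rw [hc]; simp only [rSq]; ring
  have h0 : (z.1 j ^ 2 + c)^2 + z.2.2.1^2 ≠ 0 := by
    rw [hb]; simpa [gfun] using hz
  have hD := (shape1 c z.2.2.1 α (z.1 j) h0).deriv
  unfold pX psiA
  simp only [gfun_updX, ← hc]
  rw [hD, hb]
  simp only [gfun]

end Heis

namespace Heis

lemma sq_le_sum {n : ℕ} (x : Fin n → ℝ) (j : Fin n) : x j ^ 2 ≤ ∑ i, x i ^ 2 :=
  Finset.single_le_sum (fun i _ => sq_nonneg (x i)) (Finset.mem_univ j)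

lemma gfun_updY (z : Pt n) (j : Fin n) (s : ℝ) :
    gfun (z.1, Function.update z.2.1 j s, z.2.2.1, z.2.2.2)
      = (s^2 + ((∑ i, z.1 i ^ 2) + ((∑ i, z.2.1 i ^ 2) - z.2.1 j ^ 2) + z.2.2.2 ^ 2))^2
          + z.2.2.1^2 := by
  simp only [gfun, rSq, sum_update_sq]
  ring

lemma rSq_updY (z : Pt n) (j : Fin n) (s : ℝ) :
    rSq (z.1, Function.update z.2.1 j s, z.2.2.1, z.2.2.2)
      = s^2 + ((∑ i, z.1 i ^ 2) + ((∑ i, z.2.1 i ^ 2) - z.2.1 j ^ 2) + z.2.2.2 ^ 2) := by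
  simp only [rSq, sum_update_sq]
  ring

lemma gfun_updL (z : Pt n) (s : ℝ) :
    gfun (z.1, z.2.1, z.2.2.1, s)
      = (s^2 + ((∑ i, z.1 i ^ 2) + (∑ i, z.2.1 i ^ 2)))^2 + z.2.2.1^2 := by
  simp only [gfun, rSq]
  ring

lemma rSq_updL (z : Pt n) (s : ℝ) :
    rSq (z.1, z.2.1, z.2.2.1, s)
      = s^2 + ((∑ i, z.1 i ^ 2) + (∑ i, z.2.1 i ^ 2)) := by
  simp only [rSq]; ring

lemma gfun_updT (z : Pt n) (s : ℝ) :
    gfun (z.1, z.2.1, s, z.2.2.2) = rSq z ^ 2 + s ^ 2 := rfl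

lemma pY_psi (α : ℝ) (j : Fin n) (z : Pt n) (hz : gfun z ≠ 0) :
    pY j (psiA α) z = α * gfun z ^ (α-1) * (4 * rSq z * z.2.1 j) := by
  set c : ℝ := (∑ i, z.1 i ^ 2) + ((∑ i, z.2.1 i ^ 2) - z.2.1 j ^ 2) + z.2.2.2 ^ 2 with hc
  have hb : z.2.1 j ^ 2 + c = rSq z := by rw [hc]; simp only [rSq]; ring
  have h0 : (z.2.1 j ^ 2 + c)^2 + z.2.2.1^2 ≠ 0 := by
    rw [hb]; simpa [gfun] using hz
  have hD := (shape1 c z.2.2.1 α (z.2.1 j) h0).deriv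
  unfold pY psiA
  simp only [gfun_updY, ← hc]
  rw [hD, hb]
  simp only [gfun]

lemma pT_psi (α : ℝ) (z : Pt n) (hz : gfun z ≠ 0) :
    pT (psiA α) z = α * gfun z ^ (α-1) * (2 * z.2.2.1) := by
  have h0 : rSq z ^ 2 + z.2.2.1 ^ 2 ≠ 0 := by simpa [gfun] using hz
  have hD := (shape2 (rSq z ^ 2) α z.2.2.1 h0).deriv
  unfold pT psiA
  simp only [gfun_updT]
  rw [hD]
  simp only [gfun]

lemma pL_psi (α : ℝ) (z : Pt n) (hz : gfun z ≠ 0) :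
    pL (psiA α) z = α * gfun z ^ (α-1) * (4 * rSq z * z.2.2.2) := by
  set c : ℝ := (∑ i, z.1 i ^ 2) + (∑ i, z.2.1 i ^ 2) with hc
  have hb : z.2.2.2 ^ 2 + c = rSq z := by rw [hc]; simp only [rSq]; ring
  have h0 : (z.2.2.2 ^ 2 + c)^2 + z.2.2.1^2 ≠ 0 := by
    rw [hb]; simpa [gfun] using hz
  have hD := (shape1 c z.2.2.1 α z.2.2.2 h0).deriv
  unfold pL psiA
  simp only [gfun_updL, ← hc]
  rw [hD, hb]
  simp only [gfun]

end Heis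

namespace Heis

lemma pXX_psi (α : ℝ) (j : Fin n) (z : Pt n) (hL : z.2.2.2 ≠ 0) :
    pX j (pX j (psiA α)) z
      = 16*α*(α-1) * gfun z ^ (α-2) * rSq z ^ 2 * z.1 j ^ 2
        + 4*α * gfun z ^ (α-1) * (rSq z + 2 * z.1 j ^ 2) := by
  set c : ℝ := (∑ i, z.1 i ^ 2) - z.1 j ^ 2 + (∑ i, z.2.1 i ^ 2) + z.2.2.2 ^ 2 with hc
  have hcpos : 0 < c := by
    have h1 := sq_le_sum z.1 j
    have h2 : 0 ≤ ∑ i, z.2.1 i ^ 2 := Finset.sum_nonneg fun i _ => sq_nonneg _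
    have h3 : 0 < z.2.2.2 ^ 2 := (sq_nonneg _).lt_of_ne (Ne.symm (pow_ne_zero 2 hL))
    rw [hc]; linarith
  have hfun : (fun s => pX j (psiA α) (Function.update z.1 j s, z.2.1, z.2.2.1, z.2.2.2))
      = fun s => (4*α) * (((s^2+c)^2+z.2.2.1^2) ^ (α-1) * ((s^2+c)*s)) := by
    funext s
    have hsc : 0 < s^2 + c := by positivity
    have hw : gfun (Function.update z.1 j s, z.2.1, z.2.2.1, z.2.2.2) ≠ 0 := by
      rw [gfun_updX, ← hc]
      exact ne_of_gt (add_pos_of_pos_of_nonneg (pow_pos hsc 2) (sq_nonneg _))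
    rw [pX_psi α j _ hw, gfun_updX, rSq_updX]
    simp only [← hc, Function.update_self]
    ring
  have hb : z.1 j ^ 2 + c = rSq z := by rw [hc]; simp only [rSq]; ring
  have h0 : (z.1 j ^ 2 + c)^2 + z.2.2.1^2 ≠ 0 := by
    rw [hb]
    exact ne_of_gt (add_pos_of_pos_of_nonneg (pow_pos (hb ▸ add_pos_of_nonneg_of_pos (sq_nonneg _) hcpos) 2) (sq_nonneg _))
  have hD := ((shape3 c z.2.2.1 (α-1) (z.1 j) h0).const_mul (4*α)).deriv
  show deriv (fun s => pX j (psiA α) (Function.update z.1 j s, z.2.1, z.2.2.1, z.2.2.2)) (z.1 j) = _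
  rw [hfun, hD]
  have he : α - 1 - 1 = α - 2 := by ring
  have hg : (z.1 j ^ 2 + c)^2 + z.2.2.1^2 = gfun z := by rw [hb]; rfl
  rw [he, hg, show c = rSq z - z.1 j ^ 2 from by rw [← hb]; ring]
  ring

end Heis

namespace Heis

lemma pYY_psi (α : ℝ) (j : Fin n) (z : Pt n) (hL : z.2.2.2 ≠ 0) :
    pY j (pY j (psiA α)) z
      = 16*α*(α-1) * gfun z ^ (α-2) * rSq z ^ 2 * z.2.1 j ^ 2
        + 4*α * gfun z ^ (α-1) * (rSq z + 2 * z.2.1 j ^ 2) := by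
  set c : ℝ := (∑ i, z.1 i ^ 2) + ((∑ i, z.2.1 i ^ 2) - z.2.1 j ^ 2) + z.2.2.2 ^ 2 with hc
  have hcpos : 0 < c := by
    have h1 := sq_le_sum z.2.1 j
    have h2 : 0 ≤ ∑ i, z.1 i ^ 2 := Finset.sum_nonneg fun i _ => sq_nonneg _
    have h3 : 0 < z.2.2.2 ^ 2 := (sq_nonneg _).lt_of_ne (Ne.symm (pow_ne_zero 2 hL))
    rw [hc]; linarith
  have hfun : (fun s => pY j (psiA α) (z.1, Function.update z.2.1 j s, z.2.2.1, z.2.2.2))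
      = fun s => (4*α) * (((s^2+c)^2+z.2.2.1^2) ^ (α-1) * ((s^2+c)*s)) := by
    funext s
    have hsc : 0 < s^2 + c := by positivity
    have hw : gfun (z.1, Function.update z.2.1 j s, z.2.2.1, z.2.2.2) ≠ 0 := by
      rw [gfun_updY, ← hc]
      exact ne_of_gt (add_pos_of_pos_of_nonneg (pow_pos hsc 2) (sq_nonneg _))
    rw [pY_psi α j _ hw, gfun_updY, rSq_updY]
    simp only [← hc, Function.update_self]
    ring
  have hb : z.2.1 j ^ 2 + c = rSq z := by rw [hc]; simp only [rSq]; ring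
  have h0 : (z.2.1 j ^ 2 + c)^2 + z.2.2.1^2 ≠ 0 := by
    exact ne_of_gt (add_pos_of_pos_of_nonneg
      (pow_pos (add_pos_of_nonneg_of_pos (sq_nonneg _) hcpos) 2) (sq_nonneg _))
  have hD := ((shape3 c z.2.2.1 (α-1) (z.2.1 j) h0).const_mul (4*α)).deriv
  show deriv (fun s => pY j (psiA α) (z.1, Function.update z.2.1 j s, z.2.2.1, z.2.2.2)) (z.2.1 j) = _
  rw [hfun, hD]
  have he : α - 1 - 1 = α - 2 := by ring
  have hg : (z.2.1 j ^ 2 + c)^2 + z.2.2.1^2 = gfun z := by rw [hb]; rfl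
  rw [he, hg, show c = rSq z - z.2.1 j ^ 2 from by rw [← hb]; ring]
  ring

lemma pXT_psi (α : ℝ) (j : Fin n) (z : Pt n) (hL : z.2.2.2 ≠ 0) :
    pX j (pT (psiA α)) z
      = 8*α*(α-1) * gfun z ^ (α-2) * rSq z * z.2.2.1 * z.1 j := by
  set c : ℝ := (∑ i, z.1 i ^ 2) - z.1 j ^ 2 + (∑ i, z.2.1 i ^ 2) + z.2.2.2 ^ 2 with hc
  have hcpos : 0 < c := by
    have h1 := sq_le_sum z.1 j
    have h2 : 0 ≤ ∑ i, z.2.1 i ^ 2 := Finset.sum_nonneg fun i _ => sq_nonneg _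
    have h3 : 0 < z.2.2.2 ^ 2 := (sq_nonneg _).lt_of_ne (Ne.symm (pow_ne_zero 2 hL))
    rw [hc]; linarith
  have hfun : (fun s => pT (psiA α) (Function.update z.1 j s, z.2.1, z.2.2.1, z.2.2.2))
      = fun s => (2*α*z.2.2.1) * (((s^2+c)^2+z.2.2.1^2) ^ (α-1)) := by
    funext s
    have hsc : 0 < s^2 + c := by positivity
    have hw : gfun (Function.update z.1 j s, z.2.1, z.2.2.1, z.2.2.2) ≠ 0 := by
      rw [gfun_updX, ← hc]
      exact ne_of_gt (add_pos_of_pos_of_nonneg (pow_pos hsc 2) (sq_nonneg _))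
    rw [pT_psi α _ hw, gfun_updX]
    simp only [← hc]
    ring
  have hb : z.1 j ^ 2 + c = rSq z := by rw [hc]; simp only [rSq]; ring
  have h0 : (z.1 j ^ 2 + c)^2 + z.2.2.1^2 ≠ 0 := by
    exact ne_of_gt (add_pos_of_pos_of_nonneg
      (pow_pos (add_pos_of_nonneg_of_pos (sq_nonneg _) hcpos) 2) (sq_nonneg _))
  have hD := ((shape1 c z.2.2.1 (α-1) (z.1 j) h0).const_mul (2*α*z.2.2.1)).deriv
  show deriv (fun s => pT (psiA α) (Function.update z.1 j s, z.2.1, z.2.2.1, z.2.2.2)) (z.1 j) = _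
  rw [hfun, hD]
  have he : α - 1 - 1 = α - 2 := by ring
  have hg : (z.1 j ^ 2 + c)^2 + z.2.2.1^2 = gfun z := by rw [hb]; rfl
  rw [he, hg, hb]
  ring

lemma pYT_psi (α : ℝ) (j : Fin n) (z : Pt n) (hL : z.2.2.2 ≠ 0) :
    pY j (pT (psiA α)) z
      = 8*α*(α-1) * gfun z ^ (α-2) * rSq z * z.2.2.1 * z.2.1 j := by
  set c : ℝ := (∑ i, z.1 i ^ 2) + ((∑ i, z.2.1 i ^ 2) - z.2.1 j ^ 2) + z.2.2.2 ^ 2 with hc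
  have hcpos : 0 < c := by
    have h1 := sq_le_sum z.2.1 j
    have h2 : 0 ≤ ∑ i, z.1 i ^ 2 := Finset.sum_nonneg fun i _ => sq_nonneg _
    have h3 : 0 < z.2.2.2 ^ 2 := (sq_nonneg _).lt_of_ne (Ne.symm (pow_ne_zero 2 hL))
    rw [hc]; linarith
  have hfun : (fun s => pT (psiA α) (z.1, Function.update z.2.1 j s, z.2.2.1, z.2.2.2))
      = fun s => (2*α*z.2.2.1) * (((s^2+c)^2+z.2.2.1^2) ^ (α-1)) := by
    funext s
    have hsc : 0 < s^2 + c := by positivity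
    have hw : gfun (z.1, Function.update z.2.1 j s, z.2.2.1, z.2.2.2) ≠ 0 := by
      rw [gfun_updY, ← hc]
      exact ne_of_gt (add_pos_of_pos_of_nonneg (pow_pos hsc 2) (sq_nonneg _))
    rw [pT_psi α _ hw, gfun_updY]
    simp only [← hc]
    ring
  have hb : z.2.1 j ^ 2 + c = rSq z := by rw [hc]; simp only [rSq]; ring
  have h0 : (z.2.1 j ^ 2 + c)^2 + z.2.2.1^2 ≠ 0 := by
    exact ne_of_gt (add_pos_of_pos_of_nonneg
      (pow_pos (add_pos_of_nonneg_of_pos (sq_nonneg _) hcpos) 2) (sq_nonneg _))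
  have hD := ((shape1 c z.2.2.1 (α-1) (z.2.1 j) h0).const_mul (2*α*z.2.2.1)).deriv
  show deriv (fun s => pT (psiA α) (z.1, Function.update z.2.1 j s, z.2.2.1, z.2.2.2)) (z.2.1 j) = _
  rw [hfun, hD]
  have he : α - 1 - 1 = α - 2 := by ring
  have hg : (z.2.1 j ^ 2 + c)^2 + z.2.2.1^2 = gfun z := by rw [hb]; rfl
  rw [he, hg, hb]
  ring

lemma pTT_psi (α : ℝ) (z : Pt n) (hL : z.2.2.2 ≠ 0) :
    pT (pT (psiA α)) z
      = 4*α*(α-1) * gfun z ^ (α-2) * z.2.2.1 ^ 2 + 2*α * gfun z ^ (α-1) := by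
  have hK : 0 < rSq z ^ 2 := by
    have h1 : 0 ≤ ∑ i, z.1 i ^ 2 := Finset.sum_nonneg fun i _ => sq_nonneg _
    have h2 : 0 ≤ ∑ i, z.2.1 i ^ 2 := Finset.sum_nonneg fun i _ => sq_nonneg _
    have h3 : 0 < z.2.2.2 ^ 2 := (sq_nonneg _).lt_of_ne (Ne.symm (pow_ne_zero 2 hL))
    have : 0 < rSq z := by unfold rSq; linarith
    positivity
  have hfun : (fun s => pT (psiA α) (z.1, z.2.1, s, z.2.2.2))
      = fun s => (2*α) * ((rSq z ^ 2 + s^2) ^ (α-1) * s) := by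
    funext s
    have hw : gfun (z.1, z.2.1, s, z.2.2.2) ≠ 0 := by
      rw [gfun_updT]
      exact ne_of_gt (add_pos_of_pos_of_nonneg hK (sq_nonneg _))
    rw [pT_psi α _ hw, gfun_updT]
    ring
  have h0 : rSq z ^ 2 + z.2.2.1 ^ 2 ≠ 0 :=
    ne_of_gt (add_pos_of_pos_of_nonneg hK (sq_nonneg _))
  have hD := ((shape4 (rSq z ^ 2) (α-1) z.2.2.1 h0).const_mul (2*α)).deriv
  show deriv (fun s => pT (psiA α) (z.1, z.2.1, s, z.2.2.2)) z.2.2.1 = _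
  rw [hfun, hD]
  have he : α - 1 - 1 = α - 2 := by ring
  have hg : rSq z ^ 2 + z.2.2.1 ^ 2 = gfun z := rfl
  rw [he, hg]
  ring

lemma pLL_psi (α : ℝ) (z : Pt n) (hL : 0 < z.2.2.2) :
    pL (pL (psiA α)) z
      = 16*α*(α-1) * gfun z ^ (α-2) * rSq z ^ 2 * z.2.2.2 ^ 2
        + 4*α * gfun z ^ (α-1) * (rSq z + 2 * z.2.2.2 ^ 2) := by
  set c : ℝ := (∑ i, z.1 i ^ 2) + (∑ i, z.2.1 i ^ 2) with hc
  have hcnn : 0 ≤ c := by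
    have h1 : 0 ≤ ∑ i, z.1 i ^ 2 := Finset.sum_nonneg fun i _ => sq_nonneg _
    have h2 : 0 ≤ ∑ i, z.2.1 i ^ 2 := Finset.sum_nonneg fun i _ => sq_nonneg _
    rw [hc]; linarith
  have hev : (fun s => pL (psiA α) (z.1, z.2.1, z.2.2.1, s))
      =ᶠ[nhds z.2.2.2] fun s => (4*α) * (((s^2+c)^2+z.2.2.1^2) ^ (α-1) * ((s^2+c)*s)) := by
    filter_upwards [Ioi_mem_nhds hL] with s hs
    have hsc : 0 < s^2 + c := add_pos_of_pos_of_nonneg (pow_pos hs 2) hcnn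
    have hw : gfun (z.1, z.2.1, z.2.2.1, s) ≠ 0 := by
      rw [gfun_updL, ← hc]
      exact ne_of_gt (add_pos_of_pos_of_nonneg (pow_pos hsc 2) (sq_nonneg _))
    rw [pL_psi α _ hw, gfun_updL, rSq_updL]
    simp only [← hc]
    ring
  have hb : z.2.2.2 ^ 2 + c = rSq z := by rw [hc]; simp only [rSq]; ring
  have h0 : (z.2.2.2 ^ 2 + c)^2 + z.2.2.1^2 ≠ 0 := by
    exact ne_of_gt (add_pos_of_pos_of_nonneg
      (pow_pos (add_pos_of_pos_of_nonneg (pow_pos hL 2) hcnn) 2) (sq_nonneg _))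
  have hD := ((shape3 c z.2.2.1 (α-1) z.2.2.2 h0).const_mul (4*α)).deriv
  show deriv (fun s => pL (psiA α) (z.1, z.2.1, z.2.2.1, s)) z.2.2.2 = _
  rw [hev.deriv_eq, hD]
  have he : α - 1 - 1 = α - 2 := by ring
  have hg : (z.2.2.2 ^ 2 + c)^2 + z.2.2.1^2 = gfun z := by rw [hb]; rfl
  rw [he, hg, show c = rSq z - z.2.2.2 ^ 2 from by rw [← hb]; ring]
  ring

end Heis


namespace Heis
variable {n : ℕ}

lemma gfun_ne_zero {z : Pt n} (hz : z ≠ 0) : gfun z ≠ 0 := by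
  obtain ⟨x, y, t, l⟩ := z
  intro h
  apply hz
  have ha : 0 ≤ ∑ i, x i ^ 2 := Finset.sum_nonneg fun i _ => sq_nonneg _
  have hb : 0 ≤ ∑ i, y i ^ 2 := Finset.sum_nonneg fun i _ => sq_nonneg _
  have hc : 0 ≤ l ^ 2 := sq_nonneg _
  have hsum : rSq (x, y, t, l) ^ 2 + t ^ 2 = 0 := by simpa [gfun] using h
  have hr2 : rSq (x, y, t, l) ^ 2 = 0 ∧ t ^ 2 = 0 := by
    constructor <;> nlinarith [sq_nonneg (rSq (x, y, t, l)), sq_nonneg t]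
  have hr : rSq (x, y, t, l) = 0 := by
    have := hr2.1
    exact pow_eq_zero_iff two_ne_zero |>.mp this
  have ht : t = 0 := pow_eq_zero_iff two_ne_zero |>.mp hr2.2
  have hrr : (∑ i, x i ^ 2) + (∑ i, y i ^ 2) + l ^ 2 = 0 := by simpa [rSq] using hr
  have hx2 : (∑ i, x i ^ 2) = 0 := by linarith
  have hy2 : (∑ i, y i ^ 2) = 0 := by linarith
  have hl : l = 0 := pow_eq_zero_iff two_ne_zero |>.mp (by linarith)
  have hx : x = 0 := by
    funext i
    have := (Finset.sum_eq_zero_iff_of_nonneg fun i _ => sq_nonneg (x i)).mp hx2 i (Finset.mem_univ i)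
    exact pow_eq_zero_iff two_ne_zero |>.mp this
  have hy : y = 0 := by
    funext i
    have := (Finset.sum_eq_zero_iff_of_nonneg fun i _ => sq_nonneg (y i)).mp hy2 i (Finset.mem_univ i)
    exact pow_eq_zero_iff two_ne_zero |>.mp this
  simp [hx, hy, ht, hl, Prod.ext_iff]

end Heis

/-- Lemma 2.1: `ψ(z) = ρ(z)^{-(Q-1)}` is `ℒ`-harmonic in the punctured
half-space and has vanishing `λ`-derivative on the punctured boundary. -/
theorem fundamental_solution (n : ℕ) :
    (∀ z : Pt n, 0 < z.2.2.2 → z ≠ 0 →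
      Lop (fun w => rho w ^ (-(2 * (n : ℝ) + 1))) z = 0) ∧
    (∀ x y : Fin n → ℝ, ∀ t : ℝ, (x, y, t, (0 : ℝ)) ≠ (0 : Pt n) →
      pL (fun w => rho w ^ (-(2 * (n : ℝ) + 1))) (x, y, t, 0) = 0) := by
  have hψ : (fun w : Pt n => rho w ^ (-(2 * (n : ℝ) + 1)))
      = psiA ((1:ℝ)/4 * (-(2 * (n : ℝ) + 1))) := by
    funext w
    simp only [rho, psiA, gfun]
    rw [← Real.rpow_mul (by positivity)]
  set α : ℝ := (1:ℝ)/4 * (-(2 * (n : ℝ) + 1)) with hα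
  constructor
  · intro z hz hz0
    have hg : gfun z ≠ 0 := gfun_ne_zero hz0
    have hL : z.2.2.2 ≠ 0 := ne_of_gt hz
    rw [hψ]
    unfold Lop subLap
    rw [pLL_psi α z hz, pTT_psi α z hL]
    have hterm : ∀ j ∈ Finset.univ, pX j (pX j (psiA α)) z + pY j (pY j (psiA α)) z
          + 4 * z.2.1 j * pX j (pT (psiA α)) z - 4 * z.1 j * pY j (pT (psiA α)) z
        = (16*α*(α-1) * gfun z ^ (α-2) * rSq z ^ 2 + 8*α*gfun z^(α-1)) * (z.1 j ^ 2 + z.2.1 j ^ 2)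
            + 8*α*gfun z^(α-1)*rSq z := by
      intro j _
      rw [pXX_psi α j z hL, pYY_psi α j z hL, pXT_psi α j z hL, pYT_psi α j z hL]
      ring
    rw [Finset.sum_congr rfl hterm, Finset.sum_add_distrib, Finset.sum_const,
      ← Finset.mul_sum, Finset.sum_add_distrib, Finset.card_univ, Fintype.card_fin,
      nsmul_eq_mul]
    have hA1 : gfun z ^ (α - 1) = gfun z ^ (α-2) * gfun z := by
      rw [show α - 1 = α - 2 + 1 by ring, Real.rpow_add_one hg]
    have hgf : gfun z = rSq z ^ 2 + z.2.2.1 ^ 2 := rfl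
    have hrs : rSq z = (∑ i, z.1 i ^ 2) + (∑ i, z.2.1 i ^ 2) + z.2.2.2 ^ 2 := rfl
    rw [hA1, hα, hgf, hrs]
    ring
  · intro x y t h0
    rw [hψ, pL_psi α _ (gfun_ne_zero h0)]
    norm_num
end
end

section
/- Let Q = 2n+2 and let U ∈ C²(ℍⁿ×ℝ⁺) depend only on (r,t), where r = (|x|²+|y|²+λ²)^{1/2}. Let v(z) = ρ(z)^{−(Q−1)} U(z̃) be the CR inversion of U. Then for every z ∈ ℍⁿ×ℝ⁺, ℒv(z) = ρ(z)^{−(Q+3)} (ℒU)(z̃). In particular, if ℒU = 0 in ℍⁿ×ℝ⁺ then ℒv = 0 in ℍⁿ×ℝ⁺. -/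
open Real Filter Set Topology MeasureTheory

noncomputable section

open Heis

namespace MyAux

/-- directional partial derivative -/
def pd (v : ℝ × ℝ) (G : ℝ × ℝ → ℝ) (q : ℝ × ℝ) : ℝ := fderiv ℝ G q v

lemma hasDerivAt_comp2 {G : ℝ × ℝ → ℝ} {φ ψ : ℝ → ℝ} {φ' ψ' a : ℝ}
    (hG : DifferentiableAt ℝ G (φ a, ψ a)) (hφ : HasDerivAt φ φ' a)
    (hψ : HasDerivAt ψ ψ' a) :
    HasDerivAt (fun x => G (φ x, ψ x))
      (φ' * pd (1,0) G (φ a, ψ a) + ψ' * pd (0,1) G (φ a, ψ a)) a := by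
  have h := hG.hasFDerivAt.comp_hasDerivAt a (hφ.prodMk hψ)
  refine h.congr_deriv ?_
  have hv : (φ', ψ') = φ' • ((1:ℝ),(0:ℝ)) + ψ' • ((0:ℝ),(1:ℝ)) := by simp
  rw [hv, map_add, (fderiv ℝ G (φ a, ψ a)).map_smul, (fderiv ℝ G (φ a, ψ a)).map_smul]
  simp [pd, smul_eq_mul]

lemma contDiffAt_pd {G : ℝ × ℝ → ℝ} {q : ℝ × ℝ} (v : ℝ × ℝ)
    (hG : ContDiffAt ℝ 2 G q) : ContDiffAt ℝ 1 (pd v G) q := by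
  have h := hG.fderiv_right (m := 1) (by norm_num)
  exact h.clm_apply contDiffAt_const

lemma pd_congr {G E : ℝ × ℝ → ℝ} {q : ℝ × ℝ} (v : ℝ × ℝ)
    (h : G =ᶠ[nhds q] E) : pd v G q = pd v E q := by
  unfold pd; rw [h.fderiv_eq]

lemma pd_e1_eq_deriv {G : ℝ × ℝ → ℝ} {q : ℝ × ℝ} (hG : DifferentiableAt ℝ G q) :
    pd (1,0) G q = deriv (fun a => G (a, q.2)) q.1 := by
  have h : HasDerivAt (fun a => G (a, q.2)) (1 * pd (1,0) G (q.1, q.2) + 0 * pd (0,1) G (q.1, q.2)) q.1 :=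
    hasDerivAt_comp2 (by simpa using hG) (hasDerivAt_id _) (hasDerivAt_const _ _)
  rw [h.deriv]; simp

lemma pd_e2_eq_deriv {G : ℝ × ℝ → ℝ} {q : ℝ × ℝ} (hG : DifferentiableAt ℝ G q) :
    pd (0,1) G q = deriv (fun b => G (q.1, b)) q.2 := by
  have h : HasDerivAt (fun b => G (q.1, b)) (0 * pd (1,0) G (q.1, q.2) + 1 * pd (0,1) G (q.1, q.2)) q.2 :=
    hasDerivAt_comp2 (by simpa using hG) (hasDerivAt_const _ _) (hasDerivAt_id _)
  rw [h.deriv]; simp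

end MyAux
namespace MyAux
open Heis

variable {n : ℕ}

lemma sum_update_sq (x : Fin n → ℝ) (j : Fin n) (a : ℝ) :
    ∑ i, (Function.update x j a i)^2 = (∑ i, x i^2) - x j^2 + a^2 := by
  have h : ∀ i, (Function.update x j a i)^2 = Function.update (fun i => x i ^ 2) j (a^2) i := by
    intro i
    by_cases hij : i = j
    · subst hij; simp
    · simp [Function.update_of_ne hij]
  rw [Finset.sum_congr rfl (fun i _ => h i), Finset.sum_update_of_mem (Finset.mem_univ j)]
  have : ∑ i ∈ Finset.univ \ {j}, x i ^ 2 = (∑ i, x i ^ 2) - x j ^ 2 := by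
    rw [Finset.sum_sdiff_eq_sub (by simp), Finset.sum_singleton]
  rw [this]; ring

lemma rSq_updX (z : Pt n) (j : Fin n) (a : ℝ) :
    rSq ((Function.update z.1 j a, z.2.1, z.2.2.1, z.2.2.2) : Pt n)
      = rSq z - z.1 j^2 + a^2 := by
  simp only [rSq, sum_update_sq]; ring

lemma rSq_updY (z : Pt n) (j : Fin n) (a : ℝ) :
    rSq ((z.1, Function.update z.2.1 j a, z.2.2.1, z.2.2.2) : Pt n)
      = rSq z - z.2.1 j^2 + a^2 := by
  simp only [rSq, sum_update_sq]; ring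

lemma rSq_updL (z : Pt n) (a : ℝ) :
    rSq ((z.1, z.2.1, z.2.2.1, a) : Pt n) = rSq z - z.2.2.2^2 + a^2 := by
  simp only [rSq]; ring

lemma rSq_updT (z : Pt n) (a : ℝ) :
    rSq ((z.1, z.2.1, a, z.2.2.2) : Pt n) = rSq z := by
  simp only [rSq]

lemma ev_pos {c a₀ : ℝ} (h : 0 < c + a₀^2) : ∀ᶠ a in nhds a₀, 0 < c + a^2 := by
  have hc : ContinuousAt (fun a : ℝ => c + a^2) a₀ := by fun_prop
  have := hc.preimage_mem_nhds (Ioi_mem_nhds h)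
  filter_upwards [this] with a ha using ha

lemma derivA {F : ℝ × ℝ → ℝ} (hF : ∀ q : ℝ × ℝ, 0 < q.1 → ContDiffAt ℝ 2 F q)
    {c t a : ℝ} (h : 0 < c + a^2) :
    HasDerivAt (fun x => F (c + x^2, t)) (2*a*pd (1,0) F (c+a^2,t)) a := by
  have hd : DifferentiableAt ℝ F (c+a^2, t) := ((hF _ h).of_le one_le_two).differentiableAt one_ne_zero
  have h2 : HasDerivAt (fun x : ℝ => c + x^2) (2*a) a := by
    simpa using (hasDerivAt_pow 2 a).const_add c
  have := hasDerivAt_comp2 (φ := fun x : ℝ => c + x^2) (ψ := fun _ => t) hd h2 (hasDerivAt_const _ _)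
  simpa using this

lemma derivB {F : ℝ × ℝ → ℝ} (hF : ∀ q : ℝ × ℝ, 0 < q.1 → ContDiffAt ℝ 2 F q)
    {c t a : ℝ} (h : 0 < c + a^2) :
    HasDerivAt (fun x => 2*x*pd (1,0) F (c+x^2,t))
      (2*pd (1,0) F (c+a^2,t) + 4*a^2*pd (1,0) (pd (1,0) F) (c+a^2,t)) a := by
  have hd : DifferentiableAt ℝ (pd (1,0) F) (c+a^2, t) :=
    (contDiffAt_pd _ (hF _ h)).differentiableAt one_ne_zero
  have h2 : HasDerivAt (fun x : ℝ => c + x^2) (2*a) a := by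
    simpa using (hasDerivAt_pow 2 a).const_add c
  have hinner := hasDerivAt_comp2 (φ := fun x : ℝ => c + x^2) (ψ := fun _ => t) hd h2 (hasDerivAt_const _ _)
  have houter := ((hasDerivAt_id a).const_mul 2).mul hinner
  refine houter.congr_deriv ?_
  simp; ring

lemma derivC {F : ℝ × ℝ → ℝ} (hF : ∀ q : ℝ × ℝ, 0 < q.1 → ContDiffAt ℝ 2 F q)
    {c t a : ℝ} (h : 0 < c + a^2) :
    HasDerivAt (fun x => pd (0,1) F (c+x^2,t))
      (2*a*pd (1,0) (pd (0,1) F) (c+a^2,t)) a := by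
  have hd : DifferentiableAt ℝ (pd (0,1) F) (c+a^2, t) :=
    (contDiffAt_pd _ (hF _ h)).differentiableAt one_ne_zero
  have h2 : HasDerivAt (fun x : ℝ => c + x^2) (2*a) a := by
    simpa using (hasDerivAt_pow 2 a).const_add c
  have := hasDerivAt_comp2 (φ := fun x : ℝ => c + x^2) (ψ := fun _ => t) hd h2 (hasDerivAt_const _ _)
  simpa using this

section Radial
variable {W : Pt n → ℝ} {F : ℝ × ℝ → ℝ}
  (hF : ∀ q : ℝ × ℝ, 0 < q.1 → ContDiffAt ℝ 2 F q)
  (hW : ∀ z : Pt n, 0 < rSq z → W z = F (rSq z, z.2.2.1))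
include hF hW

lemma B1X (j : Fin n) (z : Pt n) (hz : 0 < rSq z) :
    pX j W z = 2 * z.1 j * pd (1,0) F (rSq z, z.2.2.1) := by
  have hc : rSq z - z.1 j^2 + (z.1 j)^2 = rSq z := by ring
  have hev : (fun a => W (Function.update z.1 j a, z.2.1, z.2.2.1, z.2.2.2))
      =ᶠ[nhds (z.1 j)] fun a => F (rSq z - z.1 j^2 + a^2, z.2.2.1) := by
    filter_upwards [ev_pos (c := rSq z - z.1 j^2) (by rw [hc]; exact hz)] with a ha
    rw [hW _ (by rw [rSq_updX]; exact ha), rSq_updX]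
  rw [pX, hev.deriv_eq, (derivA hF (by rw [hc]; exact hz)).deriv, hc]

lemma B1Y (j : Fin n) (z : Pt n) (hz : 0 < rSq z) :
    pY j W z = 2 * z.2.1 j * pd (1,0) F (rSq z, z.2.2.1) := by
  have hc : rSq z - z.2.1 j^2 + (z.2.1 j)^2 = rSq z := by ring
  have hev : (fun a => W (z.1, Function.update z.2.1 j a, z.2.2.1, z.2.2.2))
      =ᶠ[nhds (z.2.1 j)] fun a => F (rSq z - z.2.1 j^2 + a^2, z.2.2.1) := by
    filter_upwards [ev_pos (c := rSq z - z.2.1 j^2) (by rw [hc]; exact hz)] with a ha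
    rw [hW _ (by rw [rSq_updY]; exact ha), rSq_updY]
  rw [pY, hev.deriv_eq, (derivA hF (by rw [hc]; exact hz)).deriv, hc]

lemma B1L (z : Pt n) (hz : 0 < rSq z) :
    pL W z = 2 * z.2.2.2 * pd (1,0) F (rSq z, z.2.2.1) := by
  have hc : rSq z - z.2.2.2^2 + (z.2.2.2)^2 = rSq z := by ring
  have hev : (fun a => W (z.1, z.2.1, z.2.2.1, a))
      =ᶠ[nhds z.2.2.2] fun a => F (rSq z - z.2.2.2^2 + a^2, z.2.2.1) := by
    filter_upwards [ev_pos (c := rSq z - z.2.2.2^2) (by rw [hc]; exact hz)] with a ha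
    rw [hW _ (by rw [rSq_updL]; exact ha), rSq_updL]
  rw [pL, hev.deriv_eq, (derivA hF (by rw [hc]; exact hz)).deriv, hc]

lemma B1T (z : Pt n) (hz : 0 < rSq z) :
    pT W z = pd (0,1) F (rSq z, z.2.2.1) := by
  have hev : ∀ a, W (z.1, z.2.1, a, z.2.2.2) = F (rSq z, a) := by
    intro a; rw [hW _ (by rw [rSq_updT]; exact hz), rSq_updT]
  have hd : DifferentiableAt ℝ F (rSq z, z.2.2.1) :=
    ((hF _ hz).of_le one_le_two).differentiableAt one_ne_zero
  have h := hasDerivAt_comp2 (φ := fun _ : ℝ => rSq z) (ψ := fun a : ℝ => a)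
    (a := z.2.2.1) hd (hasDerivAt_const _ _) (hasDerivAt_id _)
  rw [pT]
  calc deriv (fun a => W (z.1, z.2.1, a, z.2.2.2)) z.2.2.1
      = deriv (fun a => F (rSq z, a)) z.2.2.1 := by
        congr 1; funext a; exact hev a
    _ = _ := by rw [h.deriv]; simp


lemma B2X (j : Fin n) (z : Pt n) (hz : 0 < rSq z) :
    pX j (pX j W) z = 2 * pd (1,0) F (rSq z, z.2.2.1)
      + 4 * z.1 j ^ 2 * pd (1,0) (pd (1,0) F) (rSq z, z.2.2.1) := by
  have hc : rSq z - z.1 j^2 + (z.1 j)^2 = rSq z := by ring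
  have hev : (fun a => pX j W (Function.update z.1 j a, z.2.1, z.2.2.1, z.2.2.2))
      =ᶠ[nhds (z.1 j)] fun a => 2 * a * pd (1,0) F (rSq z - z.1 j^2 + a^2, z.2.2.1) := by
    filter_upwards [ev_pos (c := rSq z - z.1 j^2) (by rw [hc]; exact hz)] with a ha
    have := B1X hF hW j ((Function.update z.1 j a, z.2.1, z.2.2.1, z.2.2.2) : Pt n)
      (by rw [rSq_updX]; exact ha)
    rw [this, rSq_updX]; simp
  rw [pX, hev.deriv_eq, (derivB hF (by rw [hc]; exact hz)).deriv, hc]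

lemma B2Y (j : Fin n) (z : Pt n) (hz : 0 < rSq z) :
    pY j (pY j W) z = 2 * pd (1,0) F (rSq z, z.2.2.1)
      + 4 * z.2.1 j ^ 2 * pd (1,0) (pd (1,0) F) (rSq z, z.2.2.1) := by
  have hc : rSq z - z.2.1 j^2 + (z.2.1 j)^2 = rSq z := by ring
  have hev : (fun a => pY j W (z.1, Function.update z.2.1 j a, z.2.2.1, z.2.2.2))
      =ᶠ[nhds (z.2.1 j)] fun a => 2 * a * pd (1,0) F (rSq z - z.2.1 j^2 + a^2, z.2.2.1) := by
    filter_upwards [ev_pos (c := rSq z - z.2.1 j^2) (by rw [hc]; exact hz)] with a ha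
    have := B1Y hF hW j ((z.1, Function.update z.2.1 j a, z.2.2.1, z.2.2.2) : Pt n)
      (by rw [rSq_updY]; exact ha)
    rw [this, rSq_updY]; simp
  rw [pY, hev.deriv_eq, (derivB hF (by rw [hc]; exact hz)).deriv, hc]

lemma B2L (z : Pt n) (hz : 0 < rSq z) :
    pL (pL W) z = 2 * pd (1,0) F (rSq z, z.2.2.1)
      + 4 * z.2.2.2 ^ 2 * pd (1,0) (pd (1,0) F) (rSq z, z.2.2.1) := by
  have hc : rSq z - z.2.2.2^2 + (z.2.2.2)^2 = rSq z := by ring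
  have hev : (fun a => pL W (z.1, z.2.1, z.2.2.1, a))
      =ᶠ[nhds z.2.2.2] fun a => 2 * a * pd (1,0) F (rSq z - z.2.2.2^2 + a^2, z.2.2.1) := by
    filter_upwards [ev_pos (c := rSq z - z.2.2.2^2) (by rw [hc]; exact hz)] with a ha
    have := B1L hF hW ((z.1, z.2.1, z.2.2.1, a) : Pt n) (by rw [rSq_updL]; exact ha)
    rw [this, rSq_updL]
  rw [pL, hev.deriv_eq, (derivB hF (by rw [hc]; exact hz)).deriv, hc]

lemma B2T (z : Pt n) (hz : 0 < rSq z) :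
    pT (pT W) z = pd (0,1) (pd (0,1) F) (rSq z, z.2.2.1) := by
  have hev : ∀ a, pT W (z.1, z.2.1, a, z.2.2.2) = pd (0,1) F (rSq z, a) := by
    intro a
    have := B1T hF hW ((z.1, z.2.1, a, z.2.2.2) : Pt n) (by rw [rSq_updT]; exact hz)
    rw [this, rSq_updT]
  have hd : DifferentiableAt ℝ (pd (0,1) F) (rSq z, z.2.2.1) :=
    (contDiffAt_pd _ (hF _ hz)).differentiableAt one_ne_zero
  have h := hasDerivAt_comp2 (φ := fun _ : ℝ => rSq z) (ψ := fun a : ℝ => a)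
    (a := z.2.2.1) hd (hasDerivAt_const _ _) (hasDerivAt_id _)
  rw [pT]
  calc deriv (fun a => pT W (z.1, z.2.1, a, z.2.2.2)) z.2.2.1
      = deriv (fun a => pd (0,1) F (rSq z, a)) z.2.2.1 := by
        congr 1; funext a; exact hev a
    _ = _ := by rw [h.deriv]; simp

lemma B2XT (j : Fin n) (z : Pt n) (hz : 0 < rSq z) :
    pX j (pT W) z = 2 * z.1 j * pd (1,0) (pd (0,1) F) (rSq z, z.2.2.1) := by
  have hc : rSq z - z.1 j^2 + (z.1 j)^2 = rSq z := by ring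
  have hev : (fun a => pT W (Function.update z.1 j a, z.2.1, z.2.2.1, z.2.2.2))
      =ᶠ[nhds (z.1 j)] fun a => pd (0,1) F (rSq z - z.1 j^2 + a^2, z.2.2.1) := by
    filter_upwards [ev_pos (c := rSq z - z.1 j^2) (by rw [hc]; exact hz)] with a ha
    have := B1T hF hW ((Function.update z.1 j a, z.2.1, z.2.2.1, z.2.2.2) : Pt n)
      (by rw [rSq_updX]; exact ha)
    rw [this, rSq_updX]
  rw [pX, hev.deriv_eq, (derivC hF (by rw [hc]; exact hz)).deriv, hc]

lemma B2YT (j : Fin n) (z : Pt n) (hz : 0 < rSq z) :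
    pY j (pT W) z = 2 * z.2.1 j * pd (1,0) (pd (0,1) F) (rSq z, z.2.2.1) := by
  have hc : rSq z - z.2.1 j^2 + (z.2.1 j)^2 = rSq z := by ring
  have hev : (fun a => pT W (z.1, Function.update z.2.1 j a, z.2.2.1, z.2.2.2))
      =ᶠ[nhds (z.2.1 j)] fun a => pd (0,1) F (rSq z - z.2.1 j^2 + a^2, z.2.2.1) := by
    filter_upwards [ev_pos (c := rSq z - z.2.1 j^2) (by rw [hc]; exact hz)] with a ha
    have := B1T hF hW ((z.1, Function.update z.2.1 j a, z.2.2.1, z.2.2.2) : Pt n)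
      (by rw [rSq_updY]; exact ha)
    rw [this, rSq_updY]
  rw [pY, hev.deriv_eq, (derivC hF (by rw [hc]; exact hz)).deriv, hc]

lemma lop_radial (z : Pt n) (hz : 0 < rSq z) :
    Lop W z = (4*(n:ℝ)+2) * pd (1,0) F (rSq z, z.2.2.1)
      + 4 * rSq z * pd (1,0) (pd (1,0) F) (rSq z, z.2.2.1)
      + 4 * rSq z * pd (0,1) (pd (0,1) F) (rSq z, z.2.2.1) := by
  set q : ℝ × ℝ := (rSq z, z.2.2.1) with hq
  have hsum : ∀ j : Fin n,
      pX j (pX j W) z + pY j (pY j W) z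
        + 4 * z.2.1 j * pX j (pT W) z - 4 * z.1 j * pY j (pT W) z
      = 4 * pd (1,0) F q + 4 * z.1 j ^ 2 * pd (1,0) (pd (1,0) F) q
        + 4 * z.2.1 j ^ 2 * pd (1,0) (pd (1,0) F) q := by
    intro j
    rw [B2X hF hW j z hz, B2Y hF hW j z hz, B2XT hF hW j z hz, B2YT hF hW j z hz]
    ring
  rw [Lop, subLap, B2L hF hW z hz, B2T hF hW z hz, Finset.sum_congr rfl (fun j _ => hsum j)]
  rw [Finset.sum_add_distrib, Finset.sum_add_distrib, Finset.sum_const,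
    ← Finset.sum_mul, ← Finset.mul_sum]
  have h2 : ∑ j, 4 * z.2.1 j ^ 2 * pd (1,0) (pd (1,0) F) q
      = 4 * (∑ j, z.2.1 j ^ 2) * pd (1,0) (pd (1,0) F) q := by
    rw [← Finset.sum_mul, ← Finset.mul_sum]
  rw [h2]
  have hr : rSq z = (∑ j, z.1 j^2) + (∑ j, z.2.1 j^2) + z.2.2.2^2 := rfl
  simp only [Finset.card_univ, Fintype.card_fin, nsmul_eq_mul, hq]
  rw [hr]
  push_cast
  ring

end Radial

lemma rSq_nonneg (z : Pt n) : 0 ≤ rSq z := by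
  have h1 : (0:ℝ) ≤ ∑ j, z.1 j ^ 2 := Finset.sum_nonneg fun j _ => sq_nonneg _
  have h2 : (0:ℝ) ≤ ∑ j, z.2.1 j ^ 2 := Finset.sum_nonneg fun j _ => sq_nonneg _
  have h3 : (0:ℝ) ≤ z.2.2.2 ^ 2 := sq_nonneg _
  unfold rSq; linarith

lemma isOpen_halfSpace : IsOpen (halfSpace n) := by
  have : halfSpace n = (fun z : Pt n => z.2.2.2) ⁻¹' Set.Ioi 0 := rfl
  rw [this]
  exact isOpen_Ioi.preimage (by fun_prop)

section UF
variable {U : Pt n → ℝ}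

/-- two-variable profile of `U` -/
def FF (U : Pt n → ℝ) (q : ℝ × ℝ) : ℝ := U (0, 0, q.2, Real.sqrt q.1)

lemma rep_U (hrad : ∀ z w : Pt n, rr z = rr w → z.2.2.1 = w.2.2.1 → U z = U w)
    (z : Pt n) : U z = FF U (rSq z, z.2.2.1) := by
  apply hrad
  · show rr z = rr ((0 : Fin n → ℝ), (0 : Fin n → ℝ), z.2.2.1, Real.sqrt (rSq z))
    unfold rr
    congr 1
    have : rSq ((0 : Fin n → ℝ), (0 : Fin n → ℝ), z.2.2.1, Real.sqrt (rSq z)) =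
        Real.sqrt (rSq z) ^ 2 := by
      simp [rSq]
    rw [this, Real.sq_sqrt (rSq_nonneg z)]
  · rfl

lemma contDiff_FF (hU2 : ContDiffOn ℝ 2 U (halfSpace n)) :
    ∀ q : ℝ × ℝ, 0 < q.1 → ContDiffAt ℝ 2 (FF U) q := by
  intro q hq
  have hmem : ((0 : Fin n → ℝ), (0 : Fin n → ℝ), q.2, Real.sqrt q.1) ∈ halfSpace n :=
    Real.sqrt_pos.2 hq
  have hU : ContDiffAt ℝ 2 U ((0 : Fin n → ℝ), (0 : Fin n → ℝ), q.2, Real.sqrt q.1) :=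
    hU2.contDiffAt (isOpen_halfSpace.mem_nhds hmem)
  have hg : ContDiffAt ℝ 2
      (fun q : ℝ × ℝ => (((0 : Fin n → ℝ), (0 : Fin n → ℝ), q.2, Real.sqrt q.1) : Pt n)) q := by
    refine contDiffAt_const.prodMk (contDiffAt_const.prodMk (contDiffAt_snd.prodMk ?_))
    exact (Real.contDiffAt_sqrt hq.ne').comp q contDiffAt_fst
  exact hU.comp q hg

end UF

lemma rho_pow4 (z : Pt n) : rho z ^ 4 = rSq z ^ 2 + z.2.2.1 ^ 2 := by
  have hP : (0:ℝ) ≤ rSq z ^ 2 + z.2.2.1 ^ 2 := by positivity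
  rw [rho, ← Real.rpow_natCast ((rSq z ^ 2 + z.2.2.1 ^ 2) ^ ((1:ℝ)/4)) 4,
    ← Real.rpow_mul hP]
  norm_num

lemma rho_pos (z : Pt n) (h : 0 < rSq z) : 0 < rho z := by
  have : (0:ℝ) < rSq z ^ 2 + z.2.2.1 ^ 2 := by positivity
  exact Real.rpow_pos_of_pos this _

lemma rSq_crPt (z : Pt n) (h : 0 < rSq z) :
    rSq (crPt z) = rSq z / (rSq z ^ 2 + z.2.2.1 ^ 2) := by
  have hp : (0:ℝ) < rSq z ^ 2 + z.2.2.1 ^ 2 := by positivity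
  have h4 : rho z ^ 4 = rSq z ^ 2 + z.2.2.1 ^ 2 := rho_pow4 z
  have h2 : (rho z ^ 2) ^ 2 = rSq z ^ 2 + z.2.2.1 ^ 2 := by rw [← h4]; ring
  set s := rSq z with hs
  set t := z.2.2.1 with ht
  have hnum : ∀ i : Fin n,
      ((z.1 i * t + z.2.1 i * s) / rho z ^ 4) ^ 2
        + ((z.2.1 i * t - z.1 i * s) / rho z ^ 4) ^ 2
      = (z.1 i ^ 2 + z.2.1 i ^ 2) / (s ^ 2 + t ^ 2) := by
    intro i
    rw [div_pow, div_pow, h4, ← add_div,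
      div_eq_div_iff (by positivity) hp.ne']
    ring
  show (∑ i, ((z.1 i * t + z.2.1 i * s) / rho z ^ 4) ^ 2)
      + (∑ i, ((z.2.1 i * t - z.1 i * s) / rho z ^ 4) ^ 2)
      + (z.2.2.2 / rho z ^ 2) ^ 2 = s / (s ^ 2 + t ^ 2)
  rw [← Finset.sum_add_distrib, Finset.sum_congr rfl (fun i _ => hnum i)]
  rw [div_pow, h2, ← Finset.sum_div, Finset.sum_add_distrib]
  have hsz : s = (∑ i, z.1 i ^ 2) + (∑ i, z.2.1 i ^ 2) + z.2.2.2 ^ 2 := rfl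
  rw [div_add_div _ _ hp.ne' hp.ne', div_eq_div_iff (by positivity) hp.ne']
  rw [hsz]
  ring

lemma crPt_t (z : Pt n) : (crPt z).2.2.1 = -z.2.2.1 / (rSq z ^ 2 + z.2.2.1 ^ 2) := by
  show -z.2.2.1 / rho z ^ 4 = _
  rw [rho_pow4]

lemma crPt_mem (z : Pt n) (hz : z ∈ halfSpace n) (h : 0 < rSq z) : crPt z ∈ halfSpace n := by
  show 0 < z.2.2.2 / rho z ^ 2
  exact div_pos hz (pow_pos (rho_pos z h) 2)

/-- 2-d inversion map -/
def sg (q : ℝ × ℝ) : ℝ × ℝ := (q.1/(q.1^2+q.2^2), -q.2/(q.1^2+q.2^2))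

/-- transformed profile -/
def Hof (c : ℝ) (F : ℝ × ℝ → ℝ) (q : ℝ × ℝ) : ℝ :=
  (q.1^2+q.2^2) ^ (-c/4) * F (sg q)

section Core
variable {c : ℝ} {F : ℝ × ℝ → ℝ}
  (hF : ∀ q : ℝ × ℝ, 0 < q.1 → ContDiffAt ℝ 2 F q)

lemma sg_fst_pos {q : ℝ × ℝ} (hq : 0 < q.1) : 0 < (sg q).1 :=
  div_pos hq (by positivity)

lemma contDiffAt_sg {q : ℝ × ℝ} (hq : 0 < q.1) : ContDiffAt ℝ 2 sg q := by
  have hp : (0:ℝ) < q.1^2+q.2^2 := by positivity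
  have hP : ContDiffAt ℝ 2 (fun q : ℝ × ℝ => q.1^2+q.2^2) q := by fun_prop
  exact (contDiffAt_fst.div hP hp.ne').prodMk ((contDiffAt_snd.neg).div hP hp.ne')

include hF in
lemma contDiffAt_Hof {q : ℝ × ℝ} (hq : 0 < q.1) : ContDiffAt ℝ 2 (Hof c F) q := by
  have hp : (0:ℝ) < q.1^2+q.2^2 := by positivity
  have hP : ContDiffAt ℝ 2 (fun q : ℝ × ℝ => q.1^2+q.2^2) q := by fun_prop
  exact (hP.rpow_const_of_ne hp.ne').mul
    (((hF _ (sg_fst_pos hq)).comp q (contDiffAt_sg hq)))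

lemma hasDerivAt_P_fst (t a : ℝ) : HasDerivAt (fun x : ℝ => x^2+t^2) (2*a) a := by
  simpa using (hasDerivAt_pow 2 a).add_const (t^2)

lemma hasDerivAt_P_snd (s b : ℝ) : HasDerivAt (fun y : ℝ => s^2+y^2) (2*b) b := by
  simpa using ((hasDerivAt_pow 2 b).const_add (s^2))

lemma hasDerivAt_rpow_P_fst (β t a : ℝ) (hp : a^2+t^2 ≠ 0) :
    HasDerivAt (fun x : ℝ => (x^2+t^2)^β) (β*(2*a)*(a^2+t^2)^(β-1)) a := by
  have h := (Real.hasDerivAt_rpow_const (x := a^2+t^2) (p := β) (Or.inl hp)).comp a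
    (hasDerivAt_P_fst t a)
  refine h.congr_deriv ?_; ring

lemma hasDerivAt_rpow_P_snd (β s b : ℝ) (hp : s^2+b^2 ≠ 0) :
    HasDerivAt (fun y : ℝ => (s^2+y^2)^β) (β*(2*b)*(s^2+b^2)^(β-1)) b := by
  have h := (Real.hasDerivAt_rpow_const (x := s^2+b^2) (p := β) (Or.inl hp)).comp b
    (hasDerivAt_P_snd s b)
  refine h.congr_deriv ?_; ring

lemma hasDerivAt_sg_comp_fst (G : ℝ × ℝ → ℝ) {t a : ℝ} (hp : 0 < a^2+t^2)
    (hG : DifferentiableAt ℝ G (sg (a, t))) :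
    HasDerivAt (fun x => G (sg (x, t)))
      ( ((t^2-a^2)/(a^2+t^2)^2) * pd (1,0) G (sg (a,t))
        + (2*a*t/(a^2+t^2)^2) * pd (0,1) G (sg (a,t)) ) a := by
  have h1 : HasDerivAt (fun x : ℝ => x/(x^2+t^2)) ((t^2-a^2)/(a^2+t^2)^2) a := by
    have := (hasDerivAt_id a).div (hasDerivAt_P_fst t a) hp.ne'
    refine this.congr_deriv ?_; simp only [id_eq]; field_simp; ring
  have h2 : HasDerivAt (fun x : ℝ => -t/(x^2+t^2)) (2*a*t/(a^2+t^2)^2) a := by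
    have := (hasDerivAt_const a (-t)).div (hasDerivAt_P_fst t a) hp.ne'
    refine this.congr_deriv ?_; field_simp; ring
  have := hasDerivAt_comp2 (φ := fun x : ℝ => x/(x^2+t^2)) (ψ := fun x : ℝ => -t/(x^2+t^2))
    (by simpa [sg] using hG) h1 h2
  simpa [sg] using this

lemma hasDerivAt_sg_comp_snd (G : ℝ × ℝ → ℝ) {s b : ℝ} (hp : 0 < s^2+b^2)
    (hG : DifferentiableAt ℝ G (sg (s, b))) :
    HasDerivAt (fun y => G (sg (s, y)))
      ( (-(2*s*b)/(s^2+b^2)^2) * pd (1,0) G (sg (s,b))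
        + ((b^2-s^2)/(s^2+b^2)^2) * pd (0,1) G (sg (s,b)) ) b := by
  have h1 : HasDerivAt (fun y : ℝ => s/(s^2+y^2)) (-(2*s*b)/(s^2+b^2)^2) b := by
    have := (hasDerivAt_const b s).div (hasDerivAt_P_snd s b) hp.ne'
    refine this.congr_deriv ?_; field_simp; ring
  have h2 : HasDerivAt (fun y : ℝ => -y/(s^2+y^2)) ((b^2-s^2)/(s^2+b^2)^2) b := by
    have := ((hasDerivAt_id b).neg).div (hasDerivAt_P_snd s b) hp.ne'
    refine this.congr_deriv ?_; simp only [Pi.neg_apply, id_eq]; field_simp; ring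
  have := hasDerivAt_comp2 (φ := fun y : ℝ => s/(s^2+y^2)) (ψ := fun y : ℝ => -y/(s^2+y^2))
    (by simpa [sg] using hG) h1 h2
  simpa [sg] using this

end Core

/-- explicit first `s`-partial of `Hof` -/
def Phi (c : ℝ) (F : ℝ × ℝ → ℝ) (q : ℝ × ℝ) : ℝ :=
  (-c/4)*(2*q.1) * ((q.1^2+q.2^2)^(-c/4-1)) * F (sg q)
  + ((q.1^2+q.2^2)^(-c/4)) * ( ((q.2^2-q.1^2)/(q.1^2+q.2^2)^2) * pd (1,0) F (sg q)
      + (2*q.1*q.2/(q.1^2+q.2^2)^2) * pd (0,1) F (sg q) )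

/-- explicit first `t`-partial of `Hof` -/
def Psi (c : ℝ) (F : ℝ × ℝ → ℝ) (q : ℝ × ℝ) : ℝ :=
  (-c/4)*(2*q.2) * ((q.1^2+q.2^2)^(-c/4-1)) * F (sg q)
  + ((q.1^2+q.2^2)^(-c/4)) * ( ((-(2*q.1*q.2))/(q.1^2+q.2^2)^2) * pd (1,0) F (sg q)
      + ((q.2^2-q.1^2)/(q.1^2+q.2^2)^2) * pd (0,1) F (sg q) )

section Core2
variable {c : ℝ} {F : ℝ × ℝ → ℝ}
  (hF : ∀ q : ℝ × ℝ, 0 < q.1 → ContDiffAt ℝ 2 F q)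
include hF

lemma E1 {q : ℝ × ℝ} (hq : 0 < q.1) : pd (1,0) (Hof c F) q = Phi c F q := by
  have hp : (0:ℝ) < q.1^2+q.2^2 := by positivity
  have hFd : DifferentiableAt ℝ F (sg q) :=
    ((hF _ (sg_fst_pos hq)).of_le one_le_two).differentiableAt one_ne_zero
  have h2 : HasDerivAt (fun a => Hof c F (a, q.2))
      ((-c/4)*(2*q.1)*((q.1^2+q.2^2)^(-c/4-1)) * F (sg (q.1, q.2))
        + ((q.1^2+q.2^2)^(-c/4)) * ( ((q.2^2-q.1^2)/(q.1^2+q.2^2)^2) * pd (1,0) F (sg (q.1,q.2))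
            + (2*q.1*q.2/(q.1^2+q.2^2)^2) * pd (0,1) F (sg (q.1,q.2)) )) q.1 :=
    (hasDerivAt_rpow_P_fst (-c/4) q.2 q.1 hp.ne').mul
      (hasDerivAt_sg_comp_fst F hp (by simpa using hFd))
  rw [pd_e1_eq_deriv ((contDiffAt_Hof hF hq).differentiableAt two_ne_zero), h2.deriv]
  simp only [Prod.mk.eta]
  rw [Phi]

lemma E1t {q : ℝ × ℝ} (hq : 0 < q.1) : pd (0,1) (Hof c F) q = Psi c F q := by
  have hp : (0:ℝ) < q.1^2+q.2^2 := by positivity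
  have hFd : DifferentiableAt ℝ F (sg q) :=
    ((hF _ (sg_fst_pos hq)).of_le one_le_two).differentiableAt one_ne_zero
  have h2 : HasDerivAt (fun b => Hof c F (q.1, b))
      ((-c/4)*(2*q.2)*((q.1^2+q.2^2)^(-c/4-1)) * F (sg (q.1, q.2))
        + ((q.1^2+q.2^2)^(-c/4)) * ( ((-(2*q.1*q.2))/(q.1^2+q.2^2)^2) * pd (1,0) F (sg (q.1,q.2))
            + ((q.2^2-q.1^2)/(q.1^2+q.2^2)^2) * pd (0,1) F (sg (q.1,q.2)) )) q.2 :=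
    (hasDerivAt_rpow_P_snd (-c/4) q.1 q.2 hp.ne').mul
      (hasDerivAt_sg_comp_snd F hp (by simpa using hFd))
  rw [pd_e2_eq_deriv ((contDiffAt_Hof hF hq).differentiableAt two_ne_zero), h2.deriv]
  simp only [Prod.mk.eta]
  rw [Psi]

end Core2

section Core3
variable {c : ℝ} {F : ℝ × ℝ → ℝ}
  (hF : ∀ q : ℝ × ℝ, 0 < q.1 → ContDiffAt ℝ 2 F q)
include hF

lemma diffPhi {q : ℝ × ℝ} (hq : 0 < q.1) : DifferentiableAt ℝ (Phi c F) q := by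
  have hp : (0:ℝ) < q.1^2+q.2^2 := by positivity
  have hPd : DifferentiableAt ℝ (fun q' : ℝ × ℝ => q'.1^2+q'.2^2) q := by fun_prop
  have hsgd : DifferentiableAt ℝ sg q := (contDiffAt_sg hq).differentiableAt two_ne_zero
  have hF0 : DifferentiableAt ℝ (fun q' => F (sg q')) q :=
    (((hF _ (sg_fst_pos hq)).of_le one_le_two).differentiableAt one_ne_zero).comp q hsgd
  have hF1 : DifferentiableAt ℝ (fun q' => pd (1,0) F (sg q')) q :=
    ((contDiffAt_pd _ (hF _ (sg_fst_pos hq))).differentiableAt one_ne_zero).comp q hsgd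
  have hF2 : DifferentiableAt ℝ (fun q' => pd (0,1) F (sg q')) q :=
    ((contDiffAt_pd _ (hF _ (sg_fst_pos hq))).differentiableAt one_ne_zero).comp q hsgd
  have hr1 : DifferentiableAt ℝ (fun q' : ℝ × ℝ => (q'.1^2+q'.2^2)^(-c/4-1)) q :=
    hPd.rpow_const (Or.inl hp.ne')
  have hr0 : DifferentiableAt ℝ (fun q' : ℝ × ℝ => (q'.1^2+q'.2^2)^(-c/4)) q :=
    hPd.rpow_const (Or.inl hp.ne')
  have hdne : ((q.1^2+q.2^2)^2 : ℝ) ≠ 0 := by positivity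
  have hdenC : ContDiffAt ℝ 1 (fun q' : ℝ × ℝ => (q'.1^2+q'.2^2)^2) q := by fun_prop
  have hc1 : DifferentiableAt ℝ (fun q' : ℝ × ℝ => (q'.2^2-q'.1^2)/(q'.1^2+q'.2^2)^2) q :=
    (ContDiffAt.div (show ContDiffAt ℝ 1 (fun q' : ℝ × ℝ => q'.2^2-q'.1^2) q by fun_prop)
      hdenC hdne).differentiableAt one_ne_zero
  have hc2 : DifferentiableAt ℝ (fun q' : ℝ × ℝ => 2*q'.1*q'.2/(q'.1^2+q'.2^2)^2) q :=
    (ContDiffAt.div (show ContDiffAt ℝ 1 (fun q' : ℝ × ℝ => 2*q'.1*q'.2) q by fun_prop)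
      hdenC hdne).differentiableAt one_ne_zero
  exact (((by fun_prop : DifferentiableAt ℝ (fun q' : ℝ × ℝ => (-c/4)*(2*q'.1)) q).mul
    hr1).mul hF0).add (hr0.mul ((hc1.mul hF1).add (hc2.mul hF2)))

lemma diffPsi {q : ℝ × ℝ} (hq : 0 < q.1) : DifferentiableAt ℝ (Psi c F) q := by
  have hp : (0:ℝ) < q.1^2+q.2^2 := by positivity
  have hPd : DifferentiableAt ℝ (fun q' : ℝ × ℝ => q'.1^2+q'.2^2) q := by fun_prop
  have hsgd : DifferentiableAt ℝ sg q := (contDiffAt_sg hq).differentiableAt two_ne_zero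
  have hF0 : DifferentiableAt ℝ (fun q' => F (sg q')) q :=
    (((hF _ (sg_fst_pos hq)).of_le one_le_two).differentiableAt one_ne_zero).comp q hsgd
  have hF1 : DifferentiableAt ℝ (fun q' => pd (1,0) F (sg q')) q :=
    ((contDiffAt_pd _ (hF _ (sg_fst_pos hq))).differentiableAt one_ne_zero).comp q hsgd
  have hF2 : DifferentiableAt ℝ (fun q' => pd (0,1) F (sg q')) q :=
    ((contDiffAt_pd _ (hF _ (sg_fst_pos hq))).differentiableAt one_ne_zero).comp q hsgd
  have hr1 : DifferentiableAt ℝ (fun q' : ℝ × ℝ => (q'.1^2+q'.2^2)^(-c/4-1)) q :=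
    hPd.rpow_const (Or.inl hp.ne')
  have hr0 : DifferentiableAt ℝ (fun q' : ℝ × ℝ => (q'.1^2+q'.2^2)^(-c/4)) q :=
    hPd.rpow_const (Or.inl hp.ne')
  have hdne : ((q.1^2+q.2^2)^2 : ℝ) ≠ 0 := by positivity
  have hdenC : ContDiffAt ℝ 1 (fun q' : ℝ × ℝ => (q'.1^2+q'.2^2)^2) q := by fun_prop
  have hc1 : DifferentiableAt ℝ (fun q' : ℝ × ℝ => (-(2*q'.1*q'.2))/(q'.1^2+q'.2^2)^2) q :=
    (ContDiffAt.div (show ContDiffAt ℝ 1 (fun q' : ℝ × ℝ => -(2*q'.1*q'.2)) q by fun_prop)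
      hdenC hdne).differentiableAt one_ne_zero
  have hc2 : DifferentiableAt ℝ (fun q' : ℝ × ℝ => (q'.2^2-q'.1^2)/(q'.1^2+q'.2^2)^2) q :=
    (ContDiffAt.div (show ContDiffAt ℝ 1 (fun q' : ℝ × ℝ => q'.2^2-q'.1^2) q by fun_prop)
      hdenC hdne).differentiableAt one_ne_zero
  exact (((by fun_prop : DifferentiableAt ℝ (fun q' : ℝ × ℝ => (-c/4)*(2*q'.2)) q).mul
    hr1).mul hF0).add (hr0.mul ((hc1.mul hF1).add (hc2.mul hF2)))

set_option maxHeartbeats 2000000 in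
lemma core {q : ℝ × ℝ} (hq : 0 < q.1) :
    2*c * pd (1,0) (Hof c F) q + 4*q.1 * pd (1,0) (pd (1,0) (Hof c F)) q
      + 4*q.1 * pd (0,1) (pd (0,1) (Hof c F)) q
    = (q.1^2+q.2^2) ^ (-(c+4)/4) *
      (2*c * pd (1,0) F (sg q) + 4*(q.1/(q.1^2+q.2^2)) * pd (1,0) (pd (1,0) F) (sg q)
        + 4*(q.1/(q.1^2+q.2^2)) * pd (0,1) (pd (0,1) F) (sg q)) := by
  have hp : (0:ℝ) < q.1^2+q.2^2 := by positivity
  have hev1 : pd (1,0) (Hof c F) =ᶠ[nhds q] Phi c F := by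
    filter_upwards [(isOpen_lt continuous_const continuous_fst).mem_nhds hq] with q' hq'
    exact E1 hF hq'
  have hev2 : pd (0,1) (Hof c F) =ᶠ[nhds q] Psi c F := by
    filter_upwards [(isOpen_lt continuous_const continuous_fst).mem_nhds hq] with q' hq'
    exact E1t hF hq'
  have h11 : pd (1,0) (pd (1,0) (Hof c F)) q = deriv (fun a => Phi c F (a, q.2)) q.1 := by
    rw [pd_congr _ hev1, pd_e1_eq_deriv (diffPhi hF hq)]
  have h22 : pd (0,1) (pd (0,1) (Hof c F)) q = deriv (fun b => Psi c F (q.1, b)) q.2 := by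
    rw [pd_congr _ hev2, pd_e2_eq_deriv (diffPsi hF hq)]
  have hσpos := sg_fst_pos hq
  have hFd : DifferentiableAt ℝ F (sg (q.1, q.2)) := by
    simpa using ((hF _ hσpos).of_le one_le_two).differentiableAt one_ne_zero
  have hF1d : DifferentiableAt ℝ (pd (1,0) F) (sg (q.1, q.2)) := by
    simpa using (contDiffAt_pd ((1:ℝ),(0:ℝ)) (hF _ hσpos)).differentiableAt one_ne_zero
  have hF2d : DifferentiableAt ℝ (pd (0,1) F) (sg (q.1, q.2)) := by
    simpa using (contDiffAt_pd ((0:ℝ),(1:ℝ)) (hF _ hσpos)).differentiableAt one_ne_zero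
  -- s-direction pieces
  have hlin : HasDerivAt (fun a : ℝ => (-c/4)*(2*a)) ((-c/4)*(2*1)) q.1 :=
    HasDerivAt.const_mul _ (HasDerivAt.const_mul _ (hasDerivAt_id q.1))
  have hA1 := hasDerivAt_rpow_P_fst (-c/4-1) q.2 q.1 hp.ne'
  have hA0 := hasDerivAt_rpow_P_fst (-c/4) q.2 q.1 hp.ne'
  have hF0s := hasDerivAt_sg_comp_fst F hp hFd
  have hF1s := hasDerivAt_sg_comp_fst (pd (1,0) F) hp hF1d
  have hF2s := hasDerivAt_sg_comp_fst (pd (0,1) F) hp hF2d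
  have hc1 : HasDerivAt (fun a : ℝ => (q.2^2-a^2)/((a^2+q.2^2)^2))
      ((2*q.1^3-6*q.1*q.2^2)/(q.1^2+q.2^2)^3) q.1 := by
    have hnum : HasDerivAt (fun a : ℝ => q.2^2-a^2) (-(2*q.1)) q.1 := by
      exact ((hasDerivAt_const q.1 (q.2^2)).sub (hasDerivAt_pow 2 q.1)).congr_deriv (by simp)
    have h := hnum.div ((hasDerivAt_P_fst q.2 q.1).pow 2) (by simp only [Pi.pow_apply]; positivity)
    refine h.congr_deriv ?_
    simp only [Pi.pow_apply]
    field_simp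
    ring
  have hc2 : HasDerivAt (fun a : ℝ => 2*a*q.2/((a^2+q.2^2)^2))
      ((2*q.2^3-6*q.1^2*q.2)/(q.1^2+q.2^2)^3) q.1 := by
    have hnum : HasDerivAt (fun a : ℝ => 2*a*q.2) (2*q.2) q.1 := by
      simpa using (HasDerivAt.const_mul (2:ℝ) (hasDerivAt_id q.1)).mul_const q.2
    have h := hnum.div ((hasDerivAt_P_fst q.2 q.1).pow 2) (by simp only [Pi.pow_apply]; positivity)
    refine h.congr_deriv ?_
    simp only [Pi.pow_apply]
    field_simp
    ring
  have hbig := ((hlin.mul hA1).mul hF0s).add (hA0.mul ((hc1.mul hF1s).add (hc2.mul hF2s)))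
  have hbig' : HasDerivAt (fun a => Phi c F (a, q.2)) _ q.1 := hbig
  -- t-direction pieces
  have hlin2 : HasDerivAt (fun b : ℝ => (-c/4)*(2*b)) ((-c/4)*(2*1)) q.2 :=
    HasDerivAt.const_mul _ (HasDerivAt.const_mul _ (hasDerivAt_id q.2))
  have hB1 := hasDerivAt_rpow_P_snd (-c/4-1) q.1 q.2 hp.ne'
  have hB0 := hasDerivAt_rpow_P_snd (-c/4) q.1 q.2 hp.ne'
  have hF0t := hasDerivAt_sg_comp_snd F hp hFd
  have hF1t := hasDerivAt_sg_comp_snd (pd (1,0) F) hp hF1d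
  have hF2t := hasDerivAt_sg_comp_snd (pd (0,1) F) hp hF2d
  have hd1 : HasDerivAt (fun b : ℝ => (-(2*q.1*b))/((q.1^2+b^2)^2))
      ((6*q.1*q.2^2-2*q.1^3)/(q.1^2+q.2^2)^3) q.2 := by
    have hnum : HasDerivAt (fun b : ℝ => -(2*q.1*b)) (-(2*q.1)) q.2 := by
      exact (HasDerivAt.const_mul (2*q.1) (hasDerivAt_id q.2)).neg.congr_deriv (by simp)
    have h := hnum.div ((hasDerivAt_P_snd q.1 q.2).pow 2) (by simp only [Pi.pow_apply]; positivity)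
    refine h.congr_deriv ?_
    simp only [Pi.pow_apply]
    field_simp
    ring
  have hd2 : HasDerivAt (fun b : ℝ => (b^2-q.1^2)/((q.1^2+b^2)^2))
      ((6*q.1^2*q.2-2*q.2^3)/(q.1^2+q.2^2)^3) q.2 := by
    have hnum : HasDerivAt (fun b : ℝ => b^2-q.1^2) (2*q.2) q.2 := by
      simpa using (hasDerivAt_pow 2 q.2).sub_const (q.1^2)
    have h := hnum.div ((hasDerivAt_P_snd q.1 q.2).pow 2) (by simp only [Pi.pow_apply]; positivity)
    refine h.congr_deriv ?_
    simp only [Pi.pow_apply]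
    field_simp
    ring
  have hbigt := ((hlin2.mul hB1).mul hF0t).add (hB0.mul ((hd1.mul hF1t).add (hd2.mul hF2t)))
  have hbigt' : HasDerivAt (fun b => Psi c F (q.1, b)) _ q.2 := hbigt
  rw [E1 hF hq, h11, h22, hbig'.deriv, hbigt'.deriv]
  simp only [Phi, Prod.mk.eta, Pi.mul_apply, Pi.add_apply]
  have e2 : ((q.1:ℝ)^2+q.2^2)^(-c/4-1-1) = (q.1^2+q.2^2)^(-c/4-2) := by
    rw [show (-c/4-1-1 : ℝ) = -c/4-2 from by ring]
  have e1 : ((q.1:ℝ)^2+q.2^2)^(-c/4-1) = (q.1^2+q.2^2)^(-c/4-2) * (q.1^2+q.2^2) := by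
    rw [show (-c/4-1 : ℝ) = (-c/4-2) + 1 from by ring, Real.rpow_add hp, Real.rpow_one]
  have e0 : ((q.1:ℝ)^2+q.2^2)^(-c/4) = (q.1^2+q.2^2)^(-c/4-2) * ((q.1^2+q.2^2) * (q.1^2+q.2^2)) := by
    have h := Real.rpow_add hp (-c/4-2) 2
    rw [show ((-c/4-2) + 2 : ℝ) = -c/4 from by ring] at h
    rw [h, show ((q.1:ℝ)^2+q.2^2)^(2:ℝ) = (q.1^2+q.2^2) * (q.1^2+q.2^2) from by
      rw [Real.rpow_two]; ring]
  have eR : ((q.1:ℝ)^2+q.2^2)^(-(c+4)/4) = (q.1^2+q.2^2)^(-c/4-2) * (q.1^2+q.2^2) := by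
    rw [show (-(c+4)/4 : ℝ) = (-c/4-2) + 1 from by ring, Real.rpow_add hp, Real.rpow_one]
  rw [e2, e1, e0, eR]
  field_simp
  ring

end Core3

lemma rSq_pos (z : Pt n) (hz : z ∈ halfSpace n) : 0 < rSq z := by
  have hz0 : (0:ℝ) < z.2.2.2 := hz
  have h1 : (0:ℝ) ≤ ∑ j, z.1 j ^ 2 := Finset.sum_nonneg fun j _ => sq_nonneg _
  have h2 : (0:ℝ) ≤ ∑ j, z.2.1 j ^ 2 := Finset.sum_nonneg fun j _ => sq_nonneg _
  have h3 : (0:ℝ) < z.2.2.2 ^ 2 := by positivity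
  show (0:ℝ) < (∑ j, z.1 j ^ 2) + (∑ j, z.2.1 j ^ 2) + z.2.2.2 ^ 2
  linarith

lemma rep_v {U : Pt n → ℝ}
    (hrad : ∀ z w : Pt n, rr z = rr w → z.2.2.1 = w.2.2.1 → U z = U w)
    (z : Pt n) (h : 0 < rSq z) :
    crInv U z = Hof (2*(n:ℝ)+1) (FF U) (rSq z, z.2.2.1) := by
  have hp : (0:ℝ) < rSq z^2 + z.2.2.1^2 := by positivity
  have hr : rho z ^ (2*n+1) = (rSq z^2 + z.2.2.1^2) ^ ((2*(n:ℝ)+1)/4) := by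
    rw [rho, ← Real.rpow_natCast ((rSq z^2 + z.2.2.1^2) ^ ((1:ℝ)/4)) (2*n+1),
      ← Real.rpow_mul hp.le]
    congr 1
    push_cast; ring
  show U (crPt z) / rho z ^ (2*n+1) = _
  rw [rep_U hrad (crPt z), rSq_crPt z h, crPt_t z, hr, Hof]
  rw [div_eq_mul_inv, ← Real.rpow_neg hp.le, mul_comm]
  have hsg : sg ((rSq z, z.2.2.1) : ℝ × ℝ)
      = (rSq z / (rSq z^2 + z.2.2.1^2), -z.2.2.1 / (rSq z^2 + z.2.2.1^2)) := rfl
  rw [hsg]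
  congr 2
  ring

theorem cr_inversion_main (n : ℕ) (U : Pt n → ℝ)
    (hU2 : ContDiffOn ℝ 2 U (halfSpace n))
    (hrad : ∀ z w : Pt n, rr z = rr w → z.2.2.1 = w.2.2.1 → U z = U w) :
    ∀ z ∈ halfSpace n,
      Lop (crInv U) z = rho z ^ (-(2 * (n : ℝ) + 5)) * Lop U (crPt z) := by
  intro z hz
  have hz' : (0:ℝ) < z.2.2.2 := hz
  have hs : 0 < rSq z := by
    have h1 : (0:ℝ) ≤ ∑ j, z.1 j ^ 2 := Finset.sum_nonneg fun j _ => sq_nonneg _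
    have h2 : (0:ℝ) ≤ ∑ j, z.2.1 j ^ 2 := Finset.sum_nonneg fun j _ => sq_nonneg _
    have h3 : (0:ℝ) < z.2.2.2 ^ 2 := by positivity
    show (0:ℝ) < (∑ j, z.1 j ^ 2) + (∑ j, z.2.1 j ^ 2) + z.2.2.2 ^ 2
    linarith
  have hp : (0:ℝ) < rSq z^2 + z.2.2.1^2 := by positivity
  have hFc := contDiff_FF (U := U) hU2
  have hHC : ∀ q : ℝ × ℝ, 0 < q.1 → ContDiffAt ℝ 2 (Hof (2*(n:ℝ)+1) (FF U)) q :=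
    fun q hq => contDiffAt_Hof hFc hq
  have hWv : ∀ z' : Pt n, 0 < rSq z' →
      crInv U z' = Hof (2*(n:ℝ)+1) (FF U) (rSq z', z'.2.2.1) :=
    fun z' h' => rep_v hrad z' h'
  have hL := lop_radial hHC hWv z hs
  have hsp : 0 < rSq (crPt z) := by rw [rSq_crPt z hs]; positivity
  have hLU := lop_radial hFc (fun z' _ => rep_U hrad z') (crPt z) hsp
  have hcore := core (c := 2*(n:ℝ)+1) hFc (q := (rSq z, z.2.2.1)) hs
  dsimp only at hcore
  rw [hL, show (4*(n:ℝ)+2) = 2*(2*(n:ℝ)+1) from by ring, hcore]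
  rw [rSq_crPt z hs, crPt_t z] at hLU
  have hsg : sg ((rSq z, z.2.2.1) : ℝ × ℝ)
      = (rSq z / (rSq z^2 + z.2.2.1^2), -z.2.2.1 / (rSq z^2 + z.2.2.1^2)) := rfl
  have hrho : rho z ^ (-(2 * (n:ℝ) + 5))
      = (rSq z^2 + z.2.2.1^2) ^ (-(2*(n:ℝ)+1+4)/4) := by
    rw [rho, ← Real.rpow_mul hp.le]
    congr 1
    ring
  rw [hLU, hrho, hsg]
  ring

end MyAux

/-- conformal covariance of `ℒ` under CR inversion for functions
depending only on `(r, t)`: `ℒ v(z) = ρ(z)^{-(Q+3)} (ℒ U)(z̃)`; in particular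
`ℒ U = 0` implies `ℒ v = 0`. -/
theorem cr_inversion_conformal (n : ℕ) (U : Pt n → ℝ)
    (hU2 : ContDiffOn ℝ 2 U (halfSpace n))
    (hrad : ∀ z w : Pt n, rr z = rr w → z.2.2.1 = w.2.2.1 → U z = U w) :
    (∀ z ∈ halfSpace n,
      Lop (crInv U) z = rho z ^ (-(2 * (n : ℝ) + 5)) * Lop U (crPt z)) ∧
    ((∀ z ∈ halfSpace n, Lop U z = 0) → ∀ z ∈ halfSpace n, Lop (crInv U) z = 0) := by
  refine ⟨MyAux.cr_inversion_main n U hU2 hrad, fun h0 z hz => ?_⟩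
  rw [MyAux.cr_inversion_main n U hU2 hrad z hz,
    h0 (crPt z) (MyAux.crPt_mem z hz (MyAux.rSq_pos z hz)), mul_zero]
end
end

section
/- (Bony's maximum principle.) Let 𝒱 be a bounded domain in ℝ^{2n+2}, let Z be a smooth vector field on 𝒱 and let a be a smooth nonnegative function on 𝒱. Assume U ∈ C²(𝒱) ∩ C¹(closure of 𝒱) satisfies −ℒU + Z(z)U + a(z)U ≥ 0 in 𝒱 and U ≥ 0 on ∂𝒱, where Z(z)U denotes the derivative of U along Z at z. Then U ≥ 0 in 𝒱. -/
open Real Filter Set Topology MeasureTheory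

noncomputable section

open Heis

namespace BonyAux
open Heis
variable {n : ℕ}

def eX (j : Fin n) : Pt n := (Pi.single j 1, 0, 0, 0)
def eY (j : Fin n) : Pt n := (0, Pi.single j 1, 0, 0)
def eT : Pt n := (0, 0, 1, 0)
def eL : Pt n := (0, 0, 0, 1)

lemma lineX (z : Pt n) (j : Fin n) (s : ℝ) :
    ((Function.update z.1 j s, z.2.1, z.2.2.1, z.2.2.2) : Pt n) = z + (s - z.1 j) • eX j := by
  refine Prod.ext ?_ (Prod.ext ?_ (Prod.ext ?_ ?_)) <;> simp [eX]
  funext i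
  by_cases h : i = j
  · subst h; simp
  · simp [Function.update_of_ne h, Pi.single_eq_of_ne h]

lemma lineY (z : Pt n) (j : Fin n) (s : ℝ) :
    ((z.1, Function.update z.2.1 j s, z.2.2.1, z.2.2.2) : Pt n) = z + (s - z.2.1 j) • eY j := by
  refine Prod.ext ?_ (Prod.ext ?_ (Prod.ext ?_ ?_)) <;> simp [eY]
  funext i
  by_cases h : i = j
  · subst h; simp
  · simp [Function.update_of_ne h, Pi.single_eq_of_ne h]

lemma lineT (z : Pt n) (s : ℝ) :
    ((z.1, z.2.1, s, z.2.2.2) : Pt n) = z + (s - z.2.2.1) • eT := by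
  refine Prod.ext ?_ (Prod.ext ?_ (Prod.ext ?_ ?_)) <;> simp [eT]

lemma lineL (z : Pt n) (s : ℝ) :
    ((z.1, z.2.1, z.2.2.1, s) : Pt n) = z + (s - z.2.2.2) • eL := by
  refine Prod.ext ?_ (Prod.ext ?_ (Prod.ext ?_ ?_)) <;> simp [eL]

lemma hasDerivAt_line (z e : Pt n) (c s : ℝ) :
    HasDerivAt (fun s : ℝ => z + (s - c) • e) e s := by
  have h : HasDerivAt (fun s : ℝ => s - c) 1 s := (hasDerivAt_id s).sub_const c
  simpa using (h.smul_const e).const_add z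

lemma deriv_line {f : Pt n → ℝ} {z : Pt n} (e : Pt n) (c : ℝ)
    (hf : DifferentiableAt ℝ f z) :
    deriv (fun s => f (z + (s - c) • e)) c = fderiv ℝ f z e := by
  have h1 : HasFDerivAt f (fderiv ℝ f z) (z + (c - c) • e) := by
    simpa using hf.hasFDerivAt
  exact (h1.comp_hasDerivAt c (hasDerivAt_line z e c c)).deriv

lemma pX_deriv (f : Pt n → ℝ) (z : Pt n) (j : Fin n) :
    pX j f z = deriv (fun s => f (z + (s - z.1 j) • eX j)) (z.1 j) := by
  unfold pX; congr 1; funext s; rw [lineX]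

lemma pY_deriv (f : Pt n → ℝ) (z : Pt n) (j : Fin n) :
    pY j f z = deriv (fun s => f (z + (s - z.2.1 j) • eY j)) (z.2.1 j) := by
  unfold pY; congr 1; funext s; rw [lineY]

lemma pT_deriv (f : Pt n → ℝ) (z : Pt n) :
    pT f z = deriv (fun s => f (z + (s - z.2.2.1) • eT)) z.2.2.1 := by
  unfold pT; congr 1; funext s; rw [lineT]

lemma pL_deriv (f : Pt n → ℝ) (z : Pt n) :
    pL f z = deriv (fun s => f (z + (s - z.2.2.2) • eL)) z.2.2.2 := by
  unfold pL; congr 1; funext s; rw [lineL]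

lemma pX_eq {f : Pt n → ℝ} {z : Pt n} (j : Fin n) (hf : DifferentiableAt ℝ f z) :
    pX j f z = fderiv ℝ f z (eX j) := by rw [pX_deriv]; exact deriv_line _ _ hf

lemma pY_eq {f : Pt n → ℝ} {z : Pt n} (j : Fin n) (hf : DifferentiableAt ℝ f z) :
    pY j f z = fderiv ℝ f z (eY j) := by rw [pY_deriv]; exact deriv_line _ _ hf

lemma pT_eq {f : Pt n → ℝ} {z : Pt n} (hf : DifferentiableAt ℝ f z) :
    pT f z = fderiv ℝ f z eT := by rw [pT_deriv]; exact deriv_line _ _ hf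

lemma pL_eq {f : Pt n → ℝ} {z : Pt n} (hf : DifferentiableAt ℝ f z) :
    pL f z = fderiv ℝ f z eL := by rw [pL_deriv]; exact deriv_line _ _ hf

end BonyAux

namespace BonyAux
open Heis
variable {n : ℕ}

lemma second_line {f : Pt n → ℝ} {O : Set (Pt n)} (hO : IsOpen O)
    (hf : ContDiffOn ℝ 2 f O) {p : Pt n} (hp : p ∈ O) (e1 e2 : Pt n) (c : ℝ)
    (F : Pt n → ℝ) (hF : ∀ z, DifferentiableAt ℝ f z → F z = fderiv ℝ f z e2) :
    deriv (fun s => F (p + (s - c) • e1)) c = fderiv ℝ (fderiv ℝ f) p e1 e2 := by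
  have hdiff : ∀ z ∈ O, DifferentiableAt ℝ f z := fun z hz =>
    (hf.differentiableOn (by norm_num)).differentiableAt (hO.mem_nhds hz)
  have hfd : ContDiffAt ℝ 1 (fderiv ℝ f) p :=
    (hf.contDiffAt (hO.mem_nhds hp)).fderiv_right (by norm_num)
  have hfd' : DifferentiableAt ℝ (fderiv ℝ f) p := hfd.differentiableAt one_ne_zero
  have hG : DifferentiableAt ℝ (fun z => fderiv ℝ f z e2) p :=
    hfd'.clm_apply (differentiableAt_const e2)
  have hline : Tendsto (fun s : ℝ => p + (s - c) • e1) (𝓝 c) (𝓝 p) := by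
    have hcont : Continuous fun s : ℝ => p + (s - c) • e1 :=
      continuous_const.add ((continuous_id.sub continuous_const).smul continuous_const)
    exact hcont.tendsto' c p (by simp)
  have hev : (fun s => F (p + (s - c) • e1))
      =ᶠ[𝓝 c] (fun s => fderiv ℝ f (p + (s - c) • e1) e2) := by
    filter_upwards [hline.eventually (eventually_mem_nhds_iff.mpr (hO.mem_nhds hp))] with s hs
    exact hF _ (hdiff _ (mem_of_mem_nhds hs))
  rw [hev.deriv_eq, deriv_line e1 c hG,
    fderiv_clm_apply hfd' (differentiableAt_const e2)]
  simp

lemma pXpX {f : Pt n → ℝ} {O : Set (Pt n)} (hO : IsOpen O)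
    (hf : ContDiffOn ℝ 2 f O) {p : Pt n} (hp : p ∈ O) (j : Fin n) :
    pX j (pX j f) p = fderiv ℝ (fderiv ℝ f) p (eX j) (eX j) := by
  rw [pX_deriv]
  exact second_line hO hf hp _ _ _ _ (fun z hz => pX_eq j hz)

lemma pYpY {f : Pt n → ℝ} {O : Set (Pt n)} (hO : IsOpen O)
    (hf : ContDiffOn ℝ 2 f O) {p : Pt n} (hp : p ∈ O) (j : Fin n) :
    pY j (pY j f) p = fderiv ℝ (fderiv ℝ f) p (eY j) (eY j) := by
  rw [pY_deriv]
  exact second_line hO hf hp _ _ _ _ (fun z hz => pY_eq j hz)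

lemma pXpT {f : Pt n → ℝ} {O : Set (Pt n)} (hO : IsOpen O)
    (hf : ContDiffOn ℝ 2 f O) {p : Pt n} (hp : p ∈ O) (j : Fin n) :
    pX j (pT f) p = fderiv ℝ (fderiv ℝ f) p (eX j) eT := by
  rw [pX_deriv]
  exact second_line hO hf hp _ _ _ _ (fun z hz => pT_eq hz)

lemma pYpT {f : Pt n → ℝ} {O : Set (Pt n)} (hO : IsOpen O)
    (hf : ContDiffOn ℝ 2 f O) {p : Pt n} (hp : p ∈ O) (j : Fin n) :
    pY j (pT f) p = fderiv ℝ (fderiv ℝ f) p (eY j) eT := by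
  rw [pY_deriv]
  exact second_line hO hf hp _ _ _ _ (fun z hz => pT_eq hz)

lemma pTpT {f : Pt n → ℝ} {O : Set (Pt n)} (hO : IsOpen O)
    (hf : ContDiffOn ℝ 2 f O) {p : Pt n} (hp : p ∈ O) :
    pT (pT f) p = fderiv ℝ (fderiv ℝ f) p eT eT := by
  rw [pT_deriv]
  exact second_line hO hf hp _ _ _ _ (fun z hz => pT_eq hz)

lemma pLpL {f : Pt n → ℝ} {O : Set (Pt n)} (hO : IsOpen O)
    (hf : ContDiffOn ℝ 2 f O) {p : Pt n} (hp : p ∈ O) :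
    pL (pL f) p = fderiv ℝ (fderiv ℝ f) p eL eL := by
  rw [pL_deriv]
  exact second_line hO hf hp _ _ _ _ (fun z hz => pL_eq hz)

lemma Lop_eq {f : Pt n → ℝ} {O : Set (Pt n)} (hO : IsOpen O)
    (hf : ContDiffOn ℝ 2 f O) {p : Pt n} (hp : p ∈ O) :
    Lop f p =
      (∑ j, (fderiv ℝ (fderiv ℝ f) p (eX j) (eX j)
        + fderiv ℝ (fderiv ℝ f) p (eY j) (eY j)
        + 4 * p.2.1 j * fderiv ℝ (fderiv ℝ f) p (eX j) eT
        - 4 * p.1 j * fderiv ℝ (fderiv ℝ f) p (eY j) eT))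
      + 4 * ((∑ j, p.1 j ^ 2) + (∑ j, p.2.1 j ^ 2)) * fderiv ℝ (fderiv ℝ f) p eT eT
      + 4 * p.2.2.2 ^ 2 * fderiv ℝ (fderiv ℝ f) p eT eT
      + fderiv ℝ (fderiv ℝ f) p eL eL := by
  rw [Lop, subLap, pLpL hO hf hp, pTpT hO hf hp]
  rw [Finset.sum_congr rfl (fun j _ => by
    rw [pXpX hO hf hp j, pYpY hO hf hp j, pXpT hO hf hp j, pYpT hO hf hp j])]
  ring

end BonyAux

namespace BonyAux
open Heis
variable {n : ℕ}

lemma second_nonneg {g : Pt n → ℝ} {O : Set (Pt n)} (hO : IsOpen O)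
    (hg : ContDiffOn ℝ 2 g O) {p : Pt n} (hp : p ∈ O) (hmin : IsLocalMin g p)
    (v : Pt n) : 0 ≤ fderiv ℝ (fderiv ℝ g) p v v := by
  by_contra hneg
  push_neg at hneg
  set c : ℝ := fderiv ℝ (fderiv ℝ g) p v v with hcdef
  set ℓ : ℝ → Pt n := fun s => p + s • v with hℓdef
  have hℓ0 : ℓ 0 = p := by simp [hℓdef]
  have hℓcont : Continuous ℓ :=
    continuous_const.add (continuous_id.smul continuous_const)
  have hℓtendsto : Tendsto ℓ (𝓝 0) (𝓝 p) := hℓcont.tendsto' 0 p hℓ0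
  have hdiff : ∀ z ∈ O, DifferentiableAt ℝ g z := fun z hz =>
    (hg.differentiableOn (by norm_num)).differentiableAt (hO.mem_nhds hz)
  set φ : ℝ → ℝ := fun s => g (ℓ s) with hφdef
  set φ₁ : ℝ → ℝ := fun s => fderiv ℝ g (ℓ s) v with hφ₁def
  have hline : ∀ s : ℝ, HasDerivAt ℓ v s := fun s => by
    simpa [hℓdef] using ((hasDerivAt_id s).smul_const v).const_add p
  have hφd : ∀ s : ℝ, ℓ s ∈ O → HasDerivAt φ (φ₁ s) s := fun s hs =>
    (hdiff _ hs).hasFDerivAt.comp_hasDerivAt s (hline s)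
  have hfd : ContDiffAt ℝ 1 (fderiv ℝ g) p :=
    (hg.contDiffAt (hO.mem_nhds hp)).fderiv_right (by norm_num)
  have hfd' : DifferentiableAt ℝ (fderiv ℝ g) p := hfd.differentiableAt one_ne_zero
  have hH : HasFDerivAt (fderiv ℝ g) (fderiv ℝ (fderiv ℝ g) p) p := hfd'.hasFDerivAt
  have hA : HasFDerivAt (fun z : Pt n => fderiv ℝ g z v)
      ((ContinuousLinearMap.apply ℝ ℝ v).comp (fderiv ℝ (fderiv ℝ g) p)) p :=
    (ContinuousLinearMap.apply ℝ ℝ v).hasFDerivAt.comp p hH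
  have hφ₁ : HasDerivAt φ₁ c 0 := by
    have h1 : HasFDerivAt (fun z : Pt n => fderiv ℝ g z v)
        ((ContinuousLinearMap.apply ℝ ℝ v).comp (fderiv ℝ (fderiv ℝ g) p)) (ℓ 0) := by
      rwa [hℓ0]
    have := h1.comp_hasDerivAt 0 (hline 0)
    simpa [hφ₁def, Function.comp_def] using this
  have hφ₁0 : φ₁ 0 = 0 := by
    simp [hφ₁def, hℓ0, hmin.fderiv_eq_zero]
  -- φ₁ is negative just to the right of 0
  have hs1 : ∀ᶠ s in 𝓝[>] (0:ℝ), φ₁ s < 0 := by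
    have h := hasDerivAt_iff_tendsto_slope.mp hφ₁
    have h2 : ∀ᶠ s in 𝓝[≠] (0:ℝ), slope φ₁ 0 s < c / 2 :=
      h.eventually (Iio_mem_nhds (by linarith))
    have hmono : 𝓝[>] (0:ℝ) ≤ 𝓝[≠] (0:ℝ) :=
      nhdsWithin_mono 0 (fun s hs => ne_of_gt hs)
    filter_upwards [h2.filter_mono hmono, self_mem_nhdsWithin] with s hs hs0
    have hs0' : (0:ℝ) < s := hs0
    have hslope : φ₁ s / s < c / 2 := by
      simpa [slope_def_field, hφ₁0] using hs
    have : φ₁ s < c / 2 * s := (div_lt_iff₀ hs0').mp hslope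
    nlinarith
  have hs2 : ∀ᶠ s in 𝓝 (0:ℝ), ℓ s ∈ O ∧ g p ≤ φ s := by
    filter_upwards [hℓtendsto.eventually (eventually_mem_nhds_iff.mpr (hO.mem_nhds hp)),
      hℓtendsto.eventually hmin] with s h1 h2
    exact ⟨mem_of_mem_nhds h1, h2⟩
  obtain ⟨δ₁, hδ₁pos, hδ₁⟩ := Metric.eventually_nhds_iff.mp hs2
  have hs1' : ∀ᶠ s in 𝓝 (0:ℝ), s ∈ Ioi (0:ℝ) → φ₁ s < 0 :=
    eventually_nhdsWithin_iff.mp hs1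
  obtain ⟨δ₂, hδ₂pos, hδ₂⟩ := Metric.eventually_nhds_iff.mp hs1'
  set δ : ℝ := min δ₁ δ₂ / 2 with hδdef
  have hδpos : 0 < δ := by positivity
  have hδ₁' : δ < δ₁ := by
    have := min_le_left δ₁ δ₂; linarith
  have hδ₂' : δ < δ₂ := by
    have := min_le_right δ₁ δ₂; linarith
  have hdist : ∀ s ∈ Icc (0:ℝ) δ, dist s 0 < min δ₁ δ₂ := by
    intro s hs
    rw [Real.dist_eq, sub_zero, abs_of_nonneg hs.1]
    have := hs.2
    have h3 : 0 < min δ₁ δ₂ := lt_min hδ₁pos hδ₂pos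
    simp only [hδdef] at this ⊢
    linarith
  have hIccO : ∀ s ∈ Icc (0:ℝ) δ, ℓ s ∈ O := fun s hs =>
    (hδ₁ (lt_of_lt_of_le (hdist s hs) (min_le_left _ _))).1
  have hcont : ContinuousOn φ (Icc 0 δ) := fun s hs =>
    ((hφd s (hIccO s hs)).continuousAt).continuousWithinAt
  have hanti : StrictAntiOn φ (Icc 0 δ) := by
    apply strictAntiOn_of_deriv_neg (convex_Icc 0 δ) hcont
    intro s hs
    rw [interior_Icc] at hs
    rw [(hφd s (hIccO s ⟨hs.1.le, hs.2.le⟩)).deriv]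
    exact hδ₂ (lt_of_lt_of_le (hdist s ⟨hs.1.le, hs.2.le⟩) (min_le_right _ _)) hs.1
  have h5 : φ δ < φ 0 :=
    hanti (left_mem_Icc.mpr hδpos.le) (right_mem_Icc.mpr hδpos.le) hδpos
  have h6 : g p ≤ φ δ :=
    (hδ₁ (lt_of_lt_of_le (hdist δ (right_mem_Icc.mpr hδpos.le)) (min_le_left _ _))).2
  have h7 : φ 0 = g p := by rw [hφdef]; simp [hℓ0]
  linarith

end BonyAux

namespace BonyAux
open Heis
variable {n : ℕ}

/-- The continuous linear projection onto the `λ` coordinate. -/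
def projL : Pt n →L[ℝ] ℝ :=
  (ContinuousLinearMap.snd ℝ ℝ ℝ).comp
    ((ContinuousLinearMap.snd ℝ (Fin n → ℝ) (ℝ × ℝ)).comp
      (ContinuousLinearMap.snd ℝ (Fin n → ℝ) ((Fin n → ℝ) × ℝ × ℝ)))

lemma projL_apply (z : Pt n) : projL z = z.2.2.2 := rfl

lemma hasFDerivAt_psi (γ : ℝ) (z : Pt n) :
    HasFDerivAt (fun z : Pt n => Real.exp (γ * z.2.2.2))
      ((γ * Real.exp (γ * z.2.2.2)) • (projL : Pt n →L[ℝ] ℝ)) z := by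
  have h1 : HasDerivAt (fun u : ℝ => γ * u) γ z.2.2.2 := by
    simpa using (hasDerivAt_id z.2.2.2).const_mul γ
  have h0 : HasDerivAt (fun u : ℝ => Real.exp (γ * u))
      (γ * Real.exp (γ * z.2.2.2)) z.2.2.2 := by
    simpa [mul_comm, Function.comp_def] using (Real.hasDerivAt_exp (γ * z.2.2.2)).comp z.2.2.2 h1
  have h2 : HasFDerivAt (fun z : Pt n => z.2.2.2) (projL : Pt n →L[ℝ] ℝ) z :=
    projL.hasFDerivAt
  simpa [Function.comp_def] using h0.comp_hasFDerivAt z h2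

lemma hasFDerivAt_psi' (γ : ℝ) (p : Pt n) :
    HasFDerivAt (fun z : Pt n => (γ * Real.exp (γ * z.2.2.2)) • (projL : Pt n →L[ℝ] ℝ))
      (((γ * (γ * Real.exp (γ * p.2.2.2))) • (projL : Pt n →L[ℝ] ℝ)).smulRight projL) p := by
  have hc : HasFDerivAt (fun z : Pt n => γ * Real.exp (γ * z.2.2.2))
      ((γ * (γ * Real.exp (γ * p.2.2.2))) • (projL : Pt n →L[ℝ] ℝ)) p := by
    have := (hasFDerivAt_psi γ p).const_mul γ
    simpa [smul_smul] using this
  exact hc.smul_const projL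

end BonyAux
namespace BonyAux
variable {n : ℕ}
lemma eX_l (j : Fin n) : (eX j).2.2.2 = 0 := rfl
lemma eY_l (j : Fin n) : (eY j).2.2.2 = 0 := rfl
lemma eT_l : (eT : Pt n).2.2.2 = 0 := rfl
lemma eL_l : (eL : Pt n).2.2.2 = 1 := rfl
end BonyAux

set_option maxHeartbeats 2000000 in
open BonyAux in
/-- Proposition 4.1, Bony's maximum principle: if
`-ℒU + Z(z)U + a(z)U ≥ 0` in a bounded domain `𝒱` with `Z` a smooth vector field,
`a` smooth and nonnegative, and `U ≥ 0` on `∂𝒱`, then `U ≥ 0` in `𝒱`. -/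
theorem bony_maximum_principle (n : ℕ) (V : Set (Pt n))
    (hVopen : IsOpen V) (hVconn : IsConnected V) (hVbdd : Bornology.IsBounded V)
    (Z : Pt n → Pt n) (hZ : ContDiffOn ℝ (⊤ : ℕ∞) Z V)
    (a : Pt n → ℝ) (ha : ContDiffOn ℝ (⊤ : ℕ∞) a V) (ha0 : ∀ z ∈ V, 0 ≤ a z)
    (U : Pt n → ℝ)
    (hU2 : ContDiffOn ℝ 2 U V) (hU1 : ContDiffOn ℝ 1 U (closure V))
    (hineq : ∀ z ∈ V, 0 ≤ -Lop U z + dirDeriv U z (Z z) + a z * U z)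
    (hbdry : ∀ z ∈ frontier V, 0 ≤ U z) :
    ∀ z ∈ V, 0 ≤ U z := by
  by_contra hcon
  push_neg at hcon
  obtain ⟨z₁, hz₁V, hz₁⟩ := hcon
  have hcomp : IsCompact (closure V) :=
    Metric.isCompact_of_isClosed_isBounded isClosed_closure hVbdd.closure
  have hUc : ContinuousOn U (closure V) := hU1.continuousOn
  obtain ⟨z₀, hz₀mem, hz₀min'⟩ :=
    hcomp.exists_isMinOn ⟨z₁, subset_closure hz₁V⟩ hUc
  have hz₀min : ∀ z ∈ closure V, U z₀ ≤ U z := fun z hz => hz₀min' hz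
  set m := U z₀ with hmdef
  have hm0 : m < 0 := lt_of_le_of_lt (hz₀min z₁ (subset_closure hz₁V)) hz₁
  -- the compact set K
  set K : Set (Pt n) := {z | z ∈ closure V ∧ U z ≤ m / 2} with hKdef
  have hKco : IsCompact K := by
    have h1 : IsClosed {q : closure V | U q.1 ≤ m / 2} :=
      isClosed_le hUc.restrict continuous_const
    have h2 : CompactSpace (closure V) := isCompact_iff_compactSpace.mp hcomp
    have h3 := h1.isCompact.image continuous_subtype_val
    convert h3 using 1
    ext z
    constructor
    · rintro ⟨h5, h6⟩; exact ⟨⟨z, h5⟩, h6, rfl⟩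
    · rintro ⟨⟨w, hw⟩, h6, rfl⟩; exact ⟨hw, h6⟩
  have hKV : K ⊆ V := by
    intro z hz
    rcases hz with ⟨hz1, hz2⟩
    by_contra hzV
    have hfr : z ∈ frontier V := by
      rw [frontier, hVopen.interior_eq]; exact ⟨hz1, hzV⟩
    have := hbdry z hfr
    linarith
  have hz₀K : z₀ ∈ K := ⟨hz₀mem, by linarith⟩
  -- bound on the λ-component of Z over K
  obtain ⟨M, hM⟩ : ∃ M, ∀ z ∈ K, (Z z).2.2.2 ≤ M := by
    have hZc : ContinuousOn (fun z => (Z z).2.2.2) K :=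
      ((continuous_snd.comp (continuous_snd.comp continuous_snd)).comp_continuousOn
        (hZ.continuousOn.mono hKV))
    obtain ⟨q, hqK, hqmax⟩ := hKco.exists_isMaxOn ⟨z₀, hz₀K⟩ hZc
    exact ⟨(Z q).2.2.2, fun z hz => hqmax hz⟩
  set γ : ℝ := max 1 (M + 1) with hγdef
  have hγ1 : 1 ≤ γ := le_max_left _ _
  have hγM : M + 1 ≤ γ := le_max_right _ _
  have hγpos : 0 < γ := lt_of_lt_of_le one_pos hγ1
  set ψ : Pt n → ℝ := fun z => Real.exp (γ * z.2.2.2) with hψdef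
  have hψcont : Continuous ψ := Real.continuous_exp.comp (continuous_const.mul
    (continuous_snd.comp (continuous_snd.comp continuous_snd)))
  -- the bound C on ψ over K
  obtain ⟨q, hqK, hqmax⟩ := hKco.exists_isMaxOn ⟨z₀, hz₀K⟩ hψcont.continuousOn
  set C : ℝ := ψ q with hCdef
  have hC0 : 0 < C := Real.exp_pos _
  have hCb : ∀ z ∈ K, ψ z ≤ C := fun z hz => hqmax hz
  set ε : ℝ := -m / (4 * C) with hεdef
  have hε : 0 < ε := by
    apply div_pos (by linarith) (by linarith)
  have hεC : ε * C = -m / 4 := by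
    rw [hεdef]; field_simp
  set g : Pt n → ℝ := fun z => U z - ε * ψ z with hgdef
  have hgcont : ContinuousOn g K :=
    (hUc.mono (fun z hz => hz.1)).sub ((hψcont.continuousOn).const_smul ε)
  obtain ⟨p, hpK, hpmin'⟩ := hKco.exists_isMinOn ⟨z₀, hz₀K⟩ hgcont
  have hpmin : ∀ z ∈ K, g p ≤ g z := fun z hz => hpmin' hz
  have hpV : p ∈ V := hKV hpK
  -- U p < m / 2
  have hUp : U p < m / 2 := by
    by_contra h
    push_neg at h
    have h1 : g p ≤ g z₀ := hpmin z₀ hz₀K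
    have h2 : g z₀ = m - ε * ψ z₀ := by simp [hgdef, hmdef]
    have h3 : ψ z₀ ≤ C := hCb z₀ hz₀K
    have h4 : 0 < ψ z₀ := Real.exp_pos _
    have h5 : ψ p ≤ C := hCb p hpK
    have h6 : g p = U p - ε * ψ p := by simp [hgdef]
    nlinarith
  -- p is a local minimum of g
  have hlocmin : IsLocalMin g p := by
    have hNopen : IsOpen (V ∩ U ⁻¹' Iio (m / 2)) :=
      hU2.continuousOn.isOpen_inter_preimage hVopen isOpen_Iio
    have hsub : V ∩ U ⁻¹' Iio (m / 2) ⊆ K := fun z hz =>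
      ⟨subset_closure hz.1, le_of_lt hz.2⟩
    filter_upwards [hNopen.mem_nhds ⟨hpV, hUp⟩] with z hz using hpmin z (hsub hz)
  -- smoothness of ψ and g
  have hψC2 : ContDiff ℝ 2 ψ := by
    rw [hψdef]
    exact Real.contDiff_exp.comp (contDiff_const.mul
      (contDiff_snd.comp (contDiff_snd.comp contDiff_snd)))
  have hgC2 : ContDiffOn ℝ 2 g V := hU2.sub ((contDiff_const.mul hψC2).contDiffOn)
  have hψfd : ∀ z : Pt n,
      HasFDerivAt ψ ((γ * Real.exp (γ * z.2.2.2)) • (projL : Pt n →L[ℝ] ℝ)) z :=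
    fun z => hasFDerivAt_psi γ z
  have hgdiff : ∀ z ∈ V, DifferentiableAt ℝ g z := fun z hz =>
    (hgC2.differentiableOn (by norm_num)).differentiableAt (hVopen.mem_nhds hz)
  have hUdiff : ∀ z ∈ V, DifferentiableAt ℝ U z := fun z hz =>
    (hU2.differentiableOn (by norm_num)).differentiableAt (hVopen.mem_nhds hz)
  have hUfun : (fun z => g z + ε * ψ z) = U := by
    funext z; simp [hgdef]
  have hDUz : ∀ z ∈ V, HasFDerivAt U
      (fderiv ℝ g z + ε • ((γ * Real.exp (γ * z.2.2.2)) • (projL : Pt n →L[ℝ] ℝ))) z := by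
    intro z hz
    have h1 := (hgdiff z hz).hasFDerivAt.add ((hψfd z).const_mul ε)
    rw [← hUfun]; exact h1
  have hDg0 : fderiv ℝ g p = 0 := hlocmin.fderiv_eq_zero
  have hDUp : fderiv ℝ U p
      = ε • ((γ * Real.exp (γ * p.2.2.2)) • (projL : Pt n →L[ℝ] ℝ)) := by
    rw [(hDUz p hpV).fderiv, hDg0, zero_add]
  -- first partials of U at p
  have hpXU : ∀ j, pX j U p = 0 := fun j => by
    rw [pX_eq j (hUdiff p hpV), hDUp]
    simp [projL_apply, eX_l]
  have hpYU : ∀ j, pY j U p = 0 := fun j => by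
    rw [pY_eq j (hUdiff p hpV), hDUp]
    simp [projL_apply, eY_l]
  have hpTU : pT U p = 0 := by
    rw [pT_eq (hUdiff p hpV), hDUp]
    simp [projL_apply, eT_l]
  have hpLU : pL U p = ε * (γ * Real.exp (γ * p.2.2.2)) := by
    rw [pL_eq (hUdiff p hpV), hDUp]
    simp [projL_apply, eL_l]
  have hdir : dirDeriv U p (Z p) = (Z p).2.2.2 * (ε * (γ * Real.exp (γ * p.2.2.2))) := by
    rw [dirDeriv, hpTU, hpLU]
    simp [hpXU, hpYU]
  -- second derivatives
  have hfdUev : fderiv ℝ U =ᶠ[𝓝 p]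
      fun z => fderiv ℝ g z + ε • ((γ * Real.exp (γ * z.2.2.2)) • (projL : Pt n →L[ℝ] ℝ)) := by
    filter_upwards [hVopen.mem_nhds hpV] with z hz
    exact (hDUz z hz).fderiv
  have hdg1 : DifferentiableAt ℝ (fderiv ℝ g) p :=
    ((hgC2.contDiffAt (hVopen.mem_nhds hpV)).fderiv_right (m := 1)
      (by norm_num)).differentiableAt one_ne_zero
  have hsum : HasFDerivAt
      (fun z => fderiv ℝ g z + ε • ((γ * Real.exp (γ * z.2.2.2)) • (projL : Pt n →L[ℝ] ℝ)))
      (fderiv ℝ (fderiv ℝ g) p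
        + ε • (((γ * (γ * Real.exp (γ * p.2.2.2))) • (projL : Pt n →L[ℝ] ℝ)).smulRight projL)) p :=
    hdg1.hasFDerivAt.add ((hasFDerivAt_psi' γ p).const_smul ε)
  have hHU : fderiv ℝ (fderiv ℝ U) p = fderiv ℝ (fderiv ℝ g) p
      + ε • (((γ * (γ * Real.exp (γ * p.2.2.2))) • (projL : Pt n →L[ℝ] ℝ)).smulRight projL) := by
    rw [hfdUev.fderiv_eq, hsum.fderiv]
  set HG : Pt n →L[ℝ] Pt n →L[ℝ] ℝ := fderiv ℝ (fderiv ℝ g) p with hHGdef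
  have hHapp : ∀ v w : Pt n, fderiv ℝ (fderiv ℝ U) p v w
      = HG v w + ε * (γ * (γ * Real.exp (γ * p.2.2.2)) * (v.2.2.2 * w.2.2.2)) := by
    intro v w
    rw [hHU]
    simp only [ContinuousLinearMap.add_apply, ContinuousLinearMap.coe_smul',
      Pi.smul_apply, ContinuousLinearMap.smulRight_apply, projL_apply, smul_eq_mul]
    ring
  have hsym : ∀ v w : Pt n, HG v w = HG w v := by
    have h := (hgC2.contDiffAt (hVopen.mem_nhds hpV)).isSymmSndFDerivAt (by norm_num)
    exact fun v w => h v w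
  have hpos : ∀ v : Pt n, 0 ≤ HG v v := fun v =>
    second_nonneg hVopen hgC2 hpV hlocmin v
  -- sum of squares decomposition
  have hexp : ∀ j : Fin n,
      HG (eX j) (eX j) + HG (eY j) (eY j)
        + 4 * p.2.1 j * HG (eX j) eT - 4 * p.1 j * HG (eY j) eT
      = HG (eX j + (2 * p.2.1 j) • eT) (eX j + (2 * p.2.1 j) • eT)
        + HG (eY j + (-(2 * p.1 j)) • eT) (eY j + (-(2 * p.1 j)) • eT)
        - 4 * (p.1 j ^ 2 + p.2.1 j ^ 2) * HG eT eT := by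
    intro j
    simp only [map_add, _root_.map_smul, ContinuousLinearMap.add_apply,
      ContinuousLinearMap.coe_smul', Pi.smul_apply, smul_eq_mul]
    linear_combination (2 * p.2.1 j) * hsym (eX j) eT - (2 * p.1 j) * hsym (eY j) eT
  have hkey : 0 ≤ (∑ j, (HG (eX j) (eX j) + HG (eY j) (eY j)
        + 4 * p.2.1 j * HG (eX j) eT - 4 * p.1 j * HG (eY j) eT))
      + 4 * ((∑ j, p.1 j ^ 2) + (∑ j, p.2.1 j ^ 2)) * HG eT eT
      + 4 * p.2.2.2 ^ 2 * HG eT eT + HG eL eL := by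
    rw [Finset.sum_congr rfl (fun j _ => hexp j), Finset.sum_sub_distrib]
    have h7 : ∑ j, 4 * (p.1 j ^ 2 + p.2.1 j ^ 2) * HG eT eT
        = 4 * ((∑ j, p.1 j ^ 2) + (∑ j, p.2.1 j ^ 2)) * HG eT eT := by
      rw [← Finset.sum_mul]
      congr 1
      rw [← Finset.mul_sum, Finset.sum_add_distrib]
    rw [h7]
    have h8 : 0 ≤ ∑ j, (HG (eX j + (2 * p.2.1 j) • eT) (eX j + (2 * p.2.1 j) • eT)
        + HG (eY j + (-(2 * p.1 j)) • eT) (eY j + (-(2 * p.1 j)) • eT)) :=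
      Finset.sum_nonneg fun j _ => add_nonneg (hpos _) (hpos _)
    have h9 : 0 ≤ 4 * p.2.2.2 ^ 2 * HG eT eT :=
      mul_nonneg (by positivity) (hpos eT)
    have h10 := hpos eL
    linarith
  -- the value of Lop U at p
  have hLopU : Lop U p = ((∑ j, (HG (eX j) (eX j) + HG (eY j) (eY j)
        + 4 * p.2.1 j * HG (eX j) eT - 4 * p.1 j * HG (eY j) eT))
      + 4 * ((∑ j, p.1 j ^ 2) + (∑ j, p.2.1 j ^ 2)) * HG eT eT
      + 4 * p.2.2.2 ^ 2 * HG eT eT + HG eL eL)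
      + ε * (γ * (γ * Real.exp (γ * p.2.2.2))) := by
    rw [Lop_eq hVopen hU2 hpV]
    simp only [hHapp, eX_l, eY_l, eT_l, eL_l, mul_zero, zero_mul, mul_one, add_zero]
    ring
  have hLopU_ge : ε * (γ * (γ * Real.exp (γ * p.2.2.2))) ≤ Lop U p := by
    rw [hLopU]; linarith
  -- conclusion
  have hineqp := hineq p hpV
  have hEpos : 0 < Real.exp (γ * p.2.2.2) := Real.exp_pos _
  have hZ4 : (Z p).2.2.2 ≤ M := hM p hpK
  have h10 : dirDeriv U p (Z p) ≤ M * (ε * (γ * Real.exp (γ * p.2.2.2))) := by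
    rw [hdir]; exact mul_le_mul_of_nonneg_right hZ4 (by positivity)
  have h11 : a p * U p ≤ 0 :=
    mul_nonpos_of_nonneg_of_nonpos (ha0 p hpV) (by linarith)
  nlinarith [hLopU_ge, h10, h11, hineqp, mul_pos hε hEpos, hγM, hγ1,
    mul_pos hγpos (mul_pos hε hEpos),
    mul_le_mul_of_nonneg_right hγM (le_of_lt (mul_pos hε hEpos))]
end
end
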